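/- arXiv:2409.16222 — 8 statements merged into one kernel-verified Lean document; each statement's English description precedes it below -/
import Mathlib

section
/- Let G be a graph with vertex set [r+m] (r ≥ 2, m ≥ 0), let n ≥ 2, and let c : (0,∞) → (0,1) satisfy c_λ → 0 as λ → ∞. If ρ ∈ CNF(n,r) is a leading diagram, then the point (nr + m − v(ρ_G), n·e(G) − e(ρ_G)) lies on the upper boundary of the convex hull of Σ_n(G,m), i.e. it equals (x_i, z_i) for some 0 ≤ i ≤ ℓ. -/
open Finset Filter Asymptotics

/-- A set partition of `[n] × [r]` is *non-flat* if each of its blocks contains at most one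
element of each row. -/
def IsNonFlat {n r : ℕ} (ρ : Finpartition (Finset.univ : Finset (Fin n × Fin r))) : Prop :=
  ∀ b ∈ ρ.parts, ∀ p ∈ b, ∀ q ∈ b, Prod.fst p = Prod.fst q → p = q

/-- A set partition of `[n] × [r]` is *connected* if `ρ ∨ π = ⊤`. -/
def IsConn {n r : ℕ} (ρ : Finpartition (Finset.univ : Finset (Fin n × Fin r))) : Prop :=
  ∀ p q : Fin n × Fin r,
    Relation.EqvGen (fun a b => a.1 = b.1 ∨ ∃ t ∈ ρ.parts, a ∈ t ∧ b ∈ t) p q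

/-- The graph `ρ_G` associated to a partition `ρ` of `[n] × [r]` and a graph `G` on `[r+m]`. -/
def rhoGraph (n r m : ℕ) (G : SimpleGraph (Fin (r + m)))
    (ρ : Finpartition (Finset.univ : Finset (Fin n × Fin r))) :
    SimpleGraph ({b // b ∈ ρ.parts} ⊕ Fin m) :=
  SimpleGraph.fromRel fun u v =>
    match u, v with
    | Sum.inl b, Sum.inl b' => ∃ i : Fin n, ∃ j₁ j₂ : Fin r,
        (i, j₁) ∈ b.1 ∧ (i, j₂) ∈ b'.1 ∧ G.Adj (Fin.castAdd m j₁) (Fin.castAdd m j₂)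
    | Sum.inl b, Sum.inr k => ∃ p ∈ b.1, G.Adj (Fin.castAdd m p.2) (Fin.natAdd r k)
    | _, _ => False

/-- The point `(nr + m − v(ρ_G), n·e(G) − e(ρ_G)) ∈ ℤ²` associated to a diagram `ρ`,
where `v(ρ_G) = |ρ| + m` and `e(ρ_G)` is the number of edges of `ρ_G`. -/
noncomputable def diagPoint (n r m : ℕ) (G : SimpleGraph (Fin (r + m)))
    (ρ : Finpartition (Finset.univ : Finset (Fin n × Fin r))) : ℤ × ℤ :=
  (((n * r + m : ℕ) : ℤ) - ((ρ.parts.card + m : ℕ) : ℤ),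
   ((n * Nat.card G.edgeSet : ℕ) : ℤ) - ((Nat.card (rhoGraph n r m G ρ).edgeSet : ℕ) : ℤ))

/-- `Σ_n(G,m) := {(nr + m − v(ρ_G), n·e(G) − e(ρ_G)) : ρ ∈ CNF(n,r)} ⊆ ℤ²`. -/
def SigmaSet (n r m : ℕ) (G : SimpleGraph (Fin (r + m))) : Set (ℤ × ℤ) :=
  {p | ∃ ρ : Finpartition (Finset.univ : Finset (Fin n × Fin r)),
        IsNonFlat ρ ∧ IsConn ρ ∧ p = diagPoint n r m G ρ}

/-- The convex hull (in `ℝ²`) of `Σ_n(G,m)`. -/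
noncomputable def hullSet (n r m : ℕ) (G : SimpleGraph (Fin (r + m))) : Set (ℝ × ℝ) :=
  convexHull ℝ ((fun p : ℤ × ℤ => ((p.1 : ℝ), (p.2 : ℝ))) '' SigmaSet n r m G)

/-- The points of `Σ_n(G,m)` lying on the upper boundary of the convex hull of `Σ_n(G,m)`:
those points of `Σ_n(G,m)` such that no point of the convex hull lies strictly above them. -/
noncomputable def UpperBdry (n r m : ℕ) (G : SimpleGraph (Fin (r + m))) : Set (ℤ × ℤ) :=
  {p ∈ SigmaSet n r m G |
    ∀ q ∈ hullSet n r m G, q.1 = (p.1 : ℝ) → q.2 ≤ (p.2 : ℝ)}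

/-- `ρ ∈ CNF(n,r)` is a *leading diagram* (for the connection scaling `c`) if for every
`σ ∈ CNF(n,r)` one has `λ^{v(σ_G)} c_λ^{e(σ_G)} = O(λ^{v(ρ_G)} c_λ^{e(ρ_G)})` as `λ → ∞`. -/
def IsLeading (n r m : ℕ) (G : SimpleGraph (Fin (r + m))) (c : ℝ → ℝ)
    (ρ : Finpartition (Finset.univ : Finset (Fin n × Fin r))) : Prop :=
  ∀ σ : Finpartition (Finset.univ : Finset (Fin n × Fin r)),
    IsNonFlat σ → IsConn σ →
    (fun lam : ℝ =>
        lam ^ (σ.parts.card + m) * c lam ^ Nat.card (rhoGraph n r m G σ).edgeSet)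
      =O[atTop]
    (fun lam : ℝ =>
        lam ^ (ρ.parts.card + m) * c lam ^ Nat.card (rhoGraph n r m G ρ).edgeSet)

/-- If `c_λ ∈ (0,1)` with `c_λ → 0` as `λ → ∞`, then every leading diagram
`ρ ∈ CNF(n,r)` lies on the upper boundary of the convex hull of `Σ_n(G,m)`. -/
theorem statement1 (n r m : ℕ) (hr : 2 ≤ r) (hn : 2 ≤ n)
    (G : SimpleGraph (Fin (r + m)))
    (c : ℝ → ℝ) (hc : ∀ lam : ℝ, 0 < lam → c lam ∈ Set.Ioo (0 : ℝ) 1)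
    (hc0 : Filter.Tendsto c Filter.atTop (nhds 0))
    (ρ : Finpartition (Finset.univ : Finset (Fin n × Fin r)))
    (hnf : IsNonFlat ρ) (hcn : IsConn ρ)
    (hlead : IsLeading n r m G c ρ) :
    diagPoint n r m G ρ ∈ UpperBdry n r m G := by
  classical
  set aρ : ℕ := ρ.parts.card + m with haρ
  set bρ : ℕ := Nat.card (rhoGraph n r m G ρ).edgeSet with hbρ
  set K1 : ℝ := ((n * r + m : ℕ) : ℝ) with hK1
  set K2 : ℝ := ((n * Nat.card G.edgeSet : ℕ) : ℝ) with hK2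
  refine ⟨⟨ρ, hnf, hcn, rfl⟩, ?_⟩
  intro q hq hq1
  by_contra hcontra
  push_neg at hcontra
  rw [hullSet, _root_.convexHull_eq] at hq
  obtain ⟨ι, t, w, z, hw0, hw1, hzmem, hcm⟩ := hq
  have key : ∀ i ∈ t, ∃ a b : ℕ,
      (z i).1 = K1 - (a : ℝ) ∧ (z i).2 = K2 - (b : ℝ) ∧
      (fun lam : ℝ => lam ^ a * c lam ^ b) =O[atTop]
        (fun lam : ℝ => lam ^ aρ * c lam ^ bρ) := by
    intro i hi
    obtain ⟨p, ⟨σ, hσnf, hσcn, rfl⟩, hpz⟩ := hzmem i hi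
    refine ⟨σ.parts.card + m, Nat.card (rhoGraph n r m G σ).edgeSet, ?_, ?_,
      hlead σ hσnf hσcn⟩
    · rw [← hpz]; simp only [diagPoint, hK1]; push_cast; ring
    · rw [← hpz]; simp only [diagPoint, hK2]; push_cast; ring
  choose! a b hA hB hO using key
  have hCex : ∀ i ∈ t, ∃ C : ℝ, 0 < C ∧
      ∀ᶠ lam in atTop,
        ‖lam ^ a i * c lam ^ b i‖ ≤ C * ‖lam ^ aρ * c lam ^ bρ‖ := by
    intro i hi
    obtain ⟨C, hC, hb⟩ := (hO i hi).exists_pos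
    exact ⟨C, hC, hb.bound⟩
  choose! C hCpos hCb using hCex
  set M : ℝ := ∑ i ∈ t, w i * Real.log (C i) with hM
  -- q as a convex combination
  have hq_eq : q = ∑ i ∈ t, w i • z i := by
    rw [← hcm, Finset.centerMass_eq_of_sum_1 t z hw1]
  have hq1' : q.1 = ∑ i ∈ t, w i * (z i).1 := by
    rw [hq_eq, Prod.fst_sum]
    exact Finset.sum_congr rfl fun i _ => rfl
  have hq2' : q.2 = ∑ i ∈ t, w i * (z i).2 := by
    rw [hq_eq, Prod.snd_sum]
    exact Finset.sum_congr rfl fun i _ => rfl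
  set Sa : ℝ := ∑ i ∈ t, w i * (a i : ℝ) with hSa
  set Sb : ℝ := ∑ i ∈ t, w i * (b i : ℝ) with hSb
  have hq1'' : q.1 = K1 - Sa := by
    rw [hq1']
    have : ∀ i ∈ t, w i * (z i).1 = w i * K1 - w i * (a i : ℝ) := by
      intro i hi; rw [hA i hi]; ring
    rw [Finset.sum_congr rfl this, Finset.sum_sub_distrib, ← Finset.sum_mul, hw1, one_mul]
  have hq2'' : q.2 = K2 - Sb := by
    rw [hq2']
    have : ∀ i ∈ t, w i * (z i).2 = w i * K2 - w i * (b i : ℝ) := by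
      intro i hi; rw [hB i hi]; ring
    rw [Finset.sum_congr rfl this, Finset.sum_sub_distrib, ← Finset.sum_mul, hw1, one_mul]
  have hρ1 : ((diagPoint n r m G ρ).1 : ℝ) = K1 - (aρ : ℝ) := by
    simp only [diagPoint, hK1, haρ]; push_cast; ring
  have hρ2 : ((diagPoint n r m G ρ).2 : ℝ) = K2 - (bρ : ℝ) := by
    simp only [diagPoint, hK2, hbρ]; push_cast; ring
  have hSaρ : Sa = (aρ : ℝ) := by
    rw [hq1'', hρ1] at hq1; linarith
  have hδ : 0 < (bρ : ℝ) - Sb := by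
    rw [hρ2] at hcontra; rw [hq2''] at hcontra; linarith
  set δ : ℝ := (bρ : ℝ) - Sb with hδdef
  -- log (c lam) → -∞
  have hcpos : ∀ᶠ lam : ℝ in atTop, 0 < c lam :=
    (eventually_gt_atTop 0).mono fun lam h => (hc lam h).1
  have hlogc : Tendsto (fun lam => Real.log (c lam)) atTop atBot := by
    have h1 : Tendsto c atTop (nhdsWithin 0 (Set.Ioi 0)) :=
      tendsto_nhdsWithin_of_tendsto_nhds_of_eventually_within c hc0 hcpos
    exact Real.tendsto_log_nhdsGT_zero.comp h1
  have hev : ∀ᶠ lam : ℝ in atTop,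
      (∀ i ∈ t, ‖lam ^ a i * c lam ^ b i‖ ≤ C i * ‖lam ^ aρ * c lam ^ bρ‖)
      ∧ 1 < lam ∧ Real.log (c lam) < -(M / δ) := by
    refine (((Filter.eventually_all_finset t).2 hCb).and
      ((eventually_gt_atTop 1).and ?_))
    exact hlogc.eventually (Filter.eventually_lt_atBot (-(M / δ)))
  obtain ⟨lam, hbnd, hlam1, hlogsmall⟩ := hev.exists
  have hlam0 : (0 : ℝ) < lam := lt_trans one_pos hlam1
  obtain ⟨hc1, hc2⟩ := hc lam hlam0
  set L : ℝ := Real.log lam with hL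
  set K : ℝ := Real.log (c lam) with hK
  have hlogi : ∀ i ∈ t,
      (a i : ℝ) * L + (b i : ℝ) * K ≤ Real.log (C i) + (aρ : ℝ) * L + (bρ : ℝ) * K := by
    intro i hi
    have h1 := hbnd i hi
    rw [Real.norm_of_nonneg (by positivity), Real.norm_of_nonneg (by positivity)] at h1
    have hLpos : (0 : ℝ) < lam ^ a i * c lam ^ b i := by positivity
    have h2 := Real.log_le_log hLpos h1
    rw [Real.log_mul (by positivity) (by positivity),
        Real.log_mul (ne_of_gt (hCpos i hi)) (by positivity),
        Real.log_mul (by positivity) (by positivity),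
        Real.log_pow, Real.log_pow, Real.log_pow, Real.log_pow] at h2
    rw [← hL, ← hK] at h2
    linarith
  have hsum := Finset.sum_le_sum fun i hi =>
    mul_le_mul_of_nonneg_left (hlogi i hi) (hw0 i hi)
  have hlhs : ∑ i ∈ t, w i * ((a i : ℝ) * L + (b i : ℝ) * K)
      = Sa * L + Sb * K := by
    have : ∀ i ∈ t, w i * ((a i : ℝ) * L + (b i : ℝ) * K)
        = (w i * (a i : ℝ)) * L + (w i * (b i : ℝ)) * K := fun i _ => by ring
    rw [Finset.sum_congr rfl this, Finset.sum_add_distrib, ← Finset.sum_mul,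
      ← Finset.sum_mul]
  have hrhs : ∑ i ∈ t, w i * (Real.log (C i) + (aρ : ℝ) * L + (bρ : ℝ) * K)
      = M + (aρ : ℝ) * L + (bρ : ℝ) * K := by
    have : ∀ i ∈ t, w i * (Real.log (C i) + (aρ : ℝ) * L + (bρ : ℝ) * K)
        = w i * Real.log (C i) + w i * ((aρ : ℝ) * L + (bρ : ℝ) * K) := fun i _ => by ring
    rw [Finset.sum_congr rfl this, Finset.sum_add_distrib, ← Finset.sum_mul, hw1,
      one_mul, hM]
    ring
  rw [hlhs, hrhs, hSaρ] at hsum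
  -- hsum : aρ L + Sb K ≤ M + aρ L + bρ K, so -δ K ≤ M
  have h3 : δ * (-K) ≤ M := by
    have h : Sb * K - (bρ : ℝ) * K ≤ M := by linarith
    rw [hδdef]; linarith [h]
  have h4 : M < δ * (-K) := by
    have : K < -(M / δ) := hlogsmall
    have h5 : δ * K < δ * (-(M / δ)) := by
      exact mul_lt_mul_of_pos_left this hδ
    rw [mul_neg, mul_div_cancel₀ _ (ne_of_gt hδ)] at h5
    nlinarith
  linarith
end

section
/- Let G be a graph with vertex set [r+m] (r ≥ 2, m ≥ 0), let n ≥ 2, and let c : (0,∞) → (0,1) satisfy c_λ → 0 as λ → ∞. Suppose ρ ∈ CNF(n,r) satisfies (nr + m − v(ρ_G), n·e(G) − e(ρ_G)) = (x_i, z_i) for some 0 ≤ i ≤ ℓ, and that the following two conditions hold: (a) either i = 0, or λ·c_λ^{(z_i − z_{i−1})/(x_i − x_{i−1})} = O(1) as λ → ∞; (b) either i = ℓ, or 1 = O(λ·c_λ^{(z_{i+1} − z_i)/(x_{i+1} − x_i)}) as λ → ∞. Then ρ is a leading diagram. -/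
open Finset Filter Asymptotics

noncomputable section SLAux

def slCast : ℤ × ℤ → ℝ × ℝ := fun p => ((p.1 : ℝ), (p.2 : ℝ))

lemma sl_halfspace (S : Set (ℤ × ℤ)) (α β γ : ℝ)
    (h : ∀ p ∈ S, α * (p.1 : ℝ) + β * (p.2 : ℝ) ≤ γ) :
    ∀ q ∈ convexHull ℝ (slCast '' S), α * q.1 + β * q.2 ≤ γ := by
  intro q hq
  have hlin : IsLinearMap ℝ (fun x : ℝ × ℝ => α * x.1 + β * x.2) := by
    constructor
    · intro a b; simp only [Prod.fst_add, Prod.snd_add]; ring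
    · intro cc x; simp only [Prod.smul_fst, Prod.smul_snd, smul_eq_mul]; ring
  have hsub : convexHull ℝ (slCast '' S) ⊆ {x : ℝ × ℝ | α * x.1 + β * x.2 ≤ γ} :=
    convexHull_min (by rintro _ ⟨p, hp, rfl⟩; exact h p hp) (convex_halfSpace_le hlin γ)
  exact hsub hq

lemma sl_max (S : Set (ℤ × ℤ)) (hfin : S.Finite) (hne : S.Nonempty) (d s : ℤ) (hd : 0 < d) :
    ∃ p ∈ S, (∀ q ∈ convexHull ℝ (slCast '' S), q.1 = (p.1 : ℝ) → q.2 ≤ (p.2 : ℝ)) ∧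
      ∀ σ ∈ S, d * σ.2 - s * σ.1 ≤ d * p.2 - s * p.1 := by
  obtain ⟨p, hpS, hpmax⟩ := Set.exists_max_image S (fun p => d * p.2 - s * p.1) hfin hne
  refine ⟨p, hpS, ?_, hpmax⟩
  intro q hq hq1
  have hhalf : ∀ τ ∈ S, (-(s : ℝ)) * (τ.1 : ℝ) + (d : ℝ) * (τ.2 : ℝ)
      ≤ ((d * p.2 - s * p.1 : ℤ) : ℝ) := by
    intro τ hτ
    have h1 := hpmax τ hτ
    have h2 : ((d * τ.2 - s * τ.1 : ℤ) : ℝ) ≤ ((d * p.2 - s * p.1 : ℤ) : ℝ) := by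
      exact_mod_cast h1
    push_cast at h2 ⊢
    linarith
  have h2 := sl_halfspace S _ _ _ hhalf q hq
  rw [hq1] at h2
  push_cast at h2
  have hd' : (0 : ℝ) < (d : ℝ) := by exact_mod_cast hd
  have h3 : (d : ℝ) * q.2 ≤ (d : ℝ) * (p.2 : ℝ) := by linarith
  exact le_of_mul_le_mul_left h3 hd'

lemma sl_minx (S : Set (ℤ × ℤ)) (hfin : S.Finite) (hne : S.Nonempty) :
    ∃ p ∈ S, (∀ q ∈ convexHull ℝ (slCast '' S), q.1 = (p.1 : ℝ) → q.2 ≤ (p.2 : ℝ)) ∧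
      ∀ σ ∈ S, p.1 ≤ σ.1 := by
  obtain ⟨w, hwS, hwmin⟩ := Set.exists_min_image S Prod.fst hfin hne
  have hAfin : {p ∈ S | p.1 = w.1}.Finite := hfin.subset (Set.sep_subset _ _)
  obtain ⟨p, hpA, hpmax⟩ := Set.exists_max_image _ Prod.snd hAfin ⟨w, hwS, rfl⟩
  obtain ⟨zb, hzbS, hzb⟩ := Set.exists_max_image S Prod.snd hfin hne
  set K : ℤ := max 0 (zb.2 - p.2) with hKdef
  have hK0 : 0 ≤ K := le_max_left _ _
  have hK1 : zb.2 - p.2 ≤ K := le_max_right _ _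
  have hhalf : ∀ τ ∈ S, (-(K : ℝ)) * (τ.1 : ℝ) + 1 * (τ.2 : ℝ)
      ≤ ((p.2 - K * w.1 : ℤ) : ℝ) := by
    intro τ hτ
    have h1 : τ.2 - K * τ.1 ≤ p.2 - K * w.1 := by
      rcases eq_or_lt_of_le (hwmin τ hτ) with h | h
      · have h2 := hpmax τ ⟨hτ, h.symm⟩
        have : K * τ.1 = K * w.1 := by rw [← h]
        linarith
      · have h2 := hzb τ hτ
        have h3 : w.1 + 1 ≤ τ.1 := h
        have h4 : K * (w.1 + 1) ≤ K * τ.1 := mul_le_mul_of_nonneg_left h3 hK0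
        nlinarith
    have h2 : ((τ.2 - K * τ.1 : ℤ) : ℝ) ≤ ((p.2 - K * w.1 : ℤ) : ℝ) := by exact_mod_cast h1
    push_cast at h2 ⊢
    linarith
  refine ⟨p, hpA.1, ?_, ?_⟩
  · intro q hq hq1
    have h2 := sl_halfspace S _ _ _ hhalf q hq
    rw [hq1, hpA.2] at h2
    push_cast at h2
    linarith
  · intro σ hσ
    have := hwmin σ hσ
    rw [hpA.2]
    exact this

lemma sl_maxx (S : Set (ℤ × ℤ)) (hfin : S.Finite) (hne : S.Nonempty) :
    ∃ p ∈ S, (∀ q ∈ convexHull ℝ (slCast '' S), q.1 = (p.1 : ℝ) → q.2 ≤ (p.2 : ℝ)) ∧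
      ∀ σ ∈ S, σ.1 ≤ p.1 := by
  obtain ⟨w, hwS, hwmax⟩ := Set.exists_max_image S Prod.fst hfin hne
  have hAfin : {p ∈ S | p.1 = w.1}.Finite := hfin.subset (Set.sep_subset _ _)
  obtain ⟨p, hpA, hpmax⟩ := Set.exists_max_image _ Prod.snd hAfin ⟨w, hwS, rfl⟩
  obtain ⟨zb, hzbS, hzb⟩ := Set.exists_max_image S Prod.snd hfin hne
  set K : ℤ := max 0 (zb.2 - p.2) with hKdef
  have hK0 : 0 ≤ K := le_max_left _ _
  have hK1 : zb.2 - p.2 ≤ K := le_max_right _ _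
  have hhalf : ∀ τ ∈ S, (K : ℝ) * (τ.1 : ℝ) + 1 * (τ.2 : ℝ)
      ≤ ((p.2 + K * w.1 : ℤ) : ℝ) := by
    intro τ hτ
    have h1 : τ.2 + K * τ.1 ≤ p.2 + K * w.1 := by
      rcases eq_or_lt_of_le (hwmax τ hτ) with h | h
      · have h2 := hpmax τ ⟨hτ, h⟩
        have : K * τ.1 = K * w.1 := by rw [h]
        linarith
      · have h2 := hzb τ hτ
        have h3 : τ.1 + 1 ≤ w.1 := h
        have h4 : K * (τ.1 + 1) ≤ K * w.1 := mul_le_mul_of_nonneg_left h3 hK0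
        nlinarith
    have h2 : ((τ.2 + K * τ.1 : ℤ) : ℝ) ≤ ((p.2 + K * w.1 : ℤ) : ℝ) := by exact_mod_cast h1
    push_cast at h2 ⊢
    linarith
  refine ⟨p, hpA.1, ?_, ?_⟩
  · intro q hq hq1
    have h2 := sl_halfspace S _ _ _ hhalf q hq
    rw [hq1, hpA.2] at h2
    push_cast at h2
    linarith
  · intro σ hσ
    have := hwmax σ hσ
    rw [hpA.2]
    exact this

lemma sl_chord (S : Set (ℤ × ℤ)) (P A B : ℤ × ℤ) (hA : A ∈ S) (hB : B ∈ S)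
    (hP : ∀ q ∈ convexHull ℝ (slCast '' S), q.1 = (P.1 : ℝ) → q.2 ≤ (P.2 : ℝ))
    (h1 : A.1 < P.1) (h2 : P.1 < B.1) :
    ((P.1 : ℝ) - (A.1 : ℝ)) * (B.2 : ℝ) + ((B.1 : ℝ) - (P.1 : ℝ)) * (A.2 : ℝ)
      ≤ ((B.1 : ℝ) - (A.1 : ℝ)) * (P.2 : ℝ) := by
  have h1' : (A.1 : ℝ) < (P.1 : ℝ) := by exact_mod_cast h1
  have h2' : (P.1 : ℝ) < (B.1 : ℝ) := by exact_mod_cast h2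
  have hD : (0 : ℝ) < (B.1 : ℝ) - (A.1 : ℝ) := by linarith
  set a : ℝ := ((B.1 : ℝ) - (P.1 : ℝ)) / ((B.1 : ℝ) - (A.1 : ℝ)) with hadef
  set b : ℝ := ((P.1 : ℝ) - (A.1 : ℝ)) / ((B.1 : ℝ) - (A.1 : ℝ)) with hbdef
  have ha0 : 0 ≤ a := div_nonneg (by linarith) hD.le
  have hb0 : 0 ≤ b := div_nonneg (by linarith) hD.le
  have hab : a + b = 1 := by rw [hadef, hbdef]; field_simp; ring
  have hAh : slCast A ∈ convexHull ℝ (slCast '' S) :=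
    subset_convexHull ℝ _ ⟨A, hA, rfl⟩
  have hBh : slCast B ∈ convexHull ℝ (slCast '' S) :=
    subset_convexHull ℝ _ ⟨B, hB, rfl⟩
  have hq : a • slCast A + b • slCast B ∈ convexHull ℝ (slCast '' S) :=
    (convex_convexHull ℝ _) hAh hBh ha0 hb0 hab
  have hq1 : (a • slCast A + b • slCast B).1 = (P.1 : ℝ) := by
    simp only [slCast, Prod.fst_add, Prod.smul_fst, smul_eq_mul]
    rw [hadef, hbdef]
    field_simp
    ring
  have h3 : (a • slCast A + b • slCast B).2 ≤ (P.2 : ℝ) := hP _ hq hq1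
  have h4 : a * (A.2 : ℝ) + b * (B.2 : ℝ) ≤ (P.2 : ℝ) := by
    simpa [slCast, smul_eq_mul] using h3
  have ha2 : a * (A.2 : ℝ) * ((B.1 : ℝ) - (A.1 : ℝ)) = ((B.1 : ℝ) - (P.1 : ℝ)) * (A.2 : ℝ) := by
    rw [hadef]; field_simp
  have hb2 : b * (B.2 : ℝ) * ((B.1 : ℝ) - (A.1 : ℝ)) = ((P.1 : ℝ) - (A.1 : ℝ)) * (B.2 : ℝ) := by
    rw [hbdef]; field_simp
  have h5 := mul_le_mul_of_nonneg_right h4 hD.le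
  nlinarith [h5, ha2, hb2]

lemma sl_key (lam cl q a b : ℝ) (h1 : 1 ≤ lam) (hc0 : 0 < cl) (hc1 : cl < 1)
    (hab : q * a ≤ b) :
    lam ^ a * cl ^ b ≤ (lam * cl ^ q) ^ a := by
  have hl0 : (0 : ℝ) < lam := lt_of_lt_of_le one_pos h1
  have h2 : cl ^ b ≤ cl ^ (q * a) := Real.rpow_le_rpow_of_exponent_ge hc0 hc1.le hab
  have h3 : cl ^ (q * a) = (cl ^ q) ^ a := Real.rpow_mul hc0.le q a
  rw [Real.mul_rpow hl0.le (Real.rpow_nonneg hc0.le q), ← h3]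
  exact mul_le_mul_of_nonneg_left h2 (Real.rpow_nonneg hl0.le a)

lemma sl_bigO (c : ℝ → ℝ) (vσ vρ eσ eρ : ℕ) (a b : ℤ)
    (hva : (vσ : ℤ) = (vρ : ℤ) + a) (heb : (eσ : ℤ) = (eρ : ℤ) + b) (K : ℝ)
    (hc : ∀ lam : ℝ, 0 < lam → c lam ∈ Set.Ioo (0 : ℝ) 1)
    (hbd : ∀ᶠ lam : ℝ in atTop, lam ^ (a : ℝ) * c lam ^ (b : ℝ) ≤ K) :
    (fun lam : ℝ => lam ^ vσ * c lam ^ eσ) =O[atTop]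
      (fun lam : ℝ => lam ^ vρ * c lam ^ eρ) := by
  rw [isBigO_iff]
  refine ⟨K, ?_⟩
  filter_upwards [hbd, eventually_ge_atTop (1 : ℝ)] with lam hK h1
  have hl0 : (0 : ℝ) < lam := lt_of_lt_of_le one_pos h1
  obtain ⟨hcl0, hcl1⟩ := hc lam hl0
  have hnorm1 : ‖lam ^ vσ * c lam ^ eσ‖ = lam ^ vσ * c lam ^ eσ :=
    Real.norm_of_nonneg (by positivity)
  have hnorm2 : ‖lam ^ vρ * c lam ^ eρ‖ = lam ^ vρ * c lam ^ eρ :=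
    Real.norm_of_nonneg (by positivity)
  rw [hnorm1, hnorm2]
  have hva' : (vσ : ℝ) = (a : ℝ) + (vρ : ℝ) := by
    have : ((vσ : ℤ) : ℝ) = ((vρ : ℤ) : ℝ) + ((a : ℤ) : ℝ) := by exact_mod_cast hva
    push_cast at this ⊢
    linarith
  have heb' : (eσ : ℝ) = (b : ℝ) + (eρ : ℝ) := by
    have : ((eσ : ℤ) : ℝ) = ((eρ : ℤ) : ℝ) + ((b : ℤ) : ℝ) := by exact_mod_cast heb
    push_cast at this ⊢
    linarith
  have e1 : lam ^ vσ = lam ^ (a : ℝ) * lam ^ vρ := by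
    rw [← Real.rpow_natCast lam vσ, ← Real.rpow_natCast lam vρ, ← Real.rpow_add hl0]
    rw [hva']
  have e2 : c lam ^ eσ = c lam ^ (b : ℝ) * c lam ^ eρ := by
    rw [← Real.rpow_natCast (c lam) eσ, ← Real.rpow_natCast (c lam) eρ, ← Real.rpow_add hcl0]
    rw [heb']
  calc lam ^ vσ * c lam ^ eσ
      = (lam ^ (a : ℝ) * c lam ^ (b : ℝ)) * (lam ^ vρ * c lam ^ eρ) := by rw [e1, e2]; ring
    _ ≤ K * (lam ^ vρ * c lam ^ eρ) := mul_le_mul_of_nonneg_right hK (by positivity)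

end SLAux


set_option maxHeartbeats 2000000 in
/-- Suppose the points of `Σ_n(G,m)` on the upper boundary of its convex hull are enumerated
as `pts 0, …, pts ℓ` with strictly increasing first coordinates. If `ρ ∈ CNF(n,r)` has
`(nr + m − v(ρ_G), n·e(G) − e(ρ_G)) = pts i` for some `i ≤ ℓ`, and
(a) either `i = 0` or `λ · c_λ^{(z_i − z_{i−1})/(x_i − x_{i−1})} = O(1)` as `λ → ∞`, and
(b) either `i = ℓ` or `1 = O(λ · c_λ^{(z_{i+1} − z_i)/(x_{i+1} − x_i)})` as `λ → ∞`,
then `ρ` is a leading diagram. -/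
theorem statement2 (n r m : ℕ) (hr : 2 ≤ r) (hn : 2 ≤ n)
    (G : SimpleGraph (Fin (r + m)))
    (c : ℝ → ℝ) (hc : ∀ lam : ℝ, 0 < lam → c lam ∈ Set.Ioo (0 : ℝ) 1)
    (hc0 : Filter.Tendsto c Filter.atTop (nhds 0))
    (ℓ : ℕ) (pts : ℕ → ℤ × ℤ)
    (henum : ∀ p : ℤ × ℤ, p ∈ UpperBdry n r m G ↔ ∃ i ≤ ℓ, p = pts i)
    (hmono : ∀ i j : ℕ, i < j → j ≤ ℓ → (pts i).1 < (pts j).1)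
    (ρ : Finpartition (Finset.univ : Finset (Fin n × Fin r)))
    (hnf : IsNonFlat ρ) (hcn : IsConn ρ)
    (i : ℕ) (hil : i ≤ ℓ) (hpt : diagPoint n r m G ρ = pts i)
    (ha : i = 0 ∨
      (fun lam : ℝ => lam * c lam ^
          ((((pts i).2 - (pts (i - 1)).2 : ℤ) : ℝ) / (((pts i).1 - (pts (i - 1)).1 : ℤ) : ℝ)))
        =O[Filter.atTop] (fun _ : ℝ => (1 : ℝ)))
    (hb : i = ℓ ∨
      (fun _ : ℝ => (1 : ℝ)) =O[Filter.atTop]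
        (fun lam : ℝ => lam * c lam ^
          ((((pts (i + 1)).2 - (pts i).2 : ℤ) : ℝ)
            / (((pts (i + 1)).1 - (pts i).1 : ℤ) : ℝ)))) :
    IsLeading n r m G c ρ := by
  classical
  intro σ hσnf hσcn
  have hfinT : Finite (Finpartition (Finset.univ : Finset (Fin n × Fin r))) :=
    Finite.of_injective (fun P => P.parts) (fun P Q h => Finpartition.ext h)
  set S : Set (ℤ × ℤ) := SigmaSet n r m G with hSdef
  have hfin : S.Finite := Set.Finite.subset (Set.finite_range (diagPoint n r m G))
    (by rintro p ⟨τ, _, _, rfl⟩; exact ⟨τ, rfl⟩)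
  have hσS : diagPoint n r m G σ ∈ S := ⟨σ, hσnf, hσcn, rfl⟩
  have hne : S.Nonempty := ⟨_, hσS⟩
  have hU : ∀ p : ℤ × ℤ, p ∈ UpperBdry n r m G ↔
      (p ∈ S ∧ ∀ q ∈ convexHull ℝ (slCast '' S), q.1 = (p.1 : ℝ) → q.2 ≤ (p.2 : ℝ)) :=
    fun p => Iff.rfl
  have hptsS : ∀ j, j ≤ ℓ → pts j ∈ S ∧
      ∀ q ∈ convexHull ℝ (slCast '' S), q.1 = ((pts j).1 : ℝ) → q.2 ≤ ((pts j).2 : ℝ) :=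
    fun j hj => (hU _).1 ((henum _).2 ⟨j, hj, rfl⟩)
  -- concavity / global line-support inequality
  have hconc : ∀ j, j < ℓ → ∀ p ∈ S,
      ((pts (j+1)).1 - (pts j).1) * p.2 - ((pts (j+1)).2 - (pts j).2) * p.1 ≤
      ((pts (j+1)).1 - (pts j).1) * (pts j).2 - ((pts (j+1)).2 - (pts j).2) * (pts j).1 := by
    intro j hj p hp
    have hj1 : j + 1 ≤ ℓ := hj
    have hd : 0 < (pts (j+1)).1 - (pts j).1 :=
      sub_pos.2 (hmono j (j+1) (Nat.lt_succ_self j) hj1)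
    obtain ⟨pm, hpmS, hpmU, hpmmax⟩ :=
      sl_max S hfin hne ((pts (j+1)).1 - (pts j).1) ((pts (j+1)).2 - (pts j).2) hd
    obtain ⟨k, hk, hpk⟩ := (henum pm).1 ((hU pm).2 ⟨hpmS, hpmU⟩)
    rw [hpk] at hpmmax
    have hkey : ((pts (j+1)).1 - (pts j).1) * (pts k).2 - ((pts (j+1)).2 - (pts j).2) * (pts k).1
        ≤ ((pts (j+1)).1 - (pts j).1) * (pts j).2 - ((pts (j+1)).2 - (pts j).2) * (pts j).1 := by
      rcases lt_trichotomy k j with hkj | hkj | hkj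
      · have hA : pts k ∈ S := (hptsS k hk).1
        have hB : pts (j+1) ∈ S := (hptsS (j+1) hj1).1
        have hPU := (hptsS j (le_of_lt hj)).2
        have h1 : (pts k).1 < (pts j).1 := hmono k j hkj (le_of_lt hj)
        have h2 : (pts j).1 < (pts (j+1)).1 := hmono j (j+1) (Nat.lt_succ_self j) hj1
        have hch := sl_chord S (pts j) (pts k) (pts (j+1)) hA hB hPU h1 h2
        have hre : (((pts (j+1)).1 : ℝ) - ((pts j).1 : ℝ)) * ((pts k).2 : ℝ)
              - (((pts (j+1)).2 : ℝ) - ((pts j).2 : ℝ)) * ((pts k).1 : ℝ)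
            ≤ (((pts (j+1)).1 : ℝ) - ((pts j).1 : ℝ)) * ((pts j).2 : ℝ)
              - (((pts (j+1)).2 : ℝ) - ((pts j).2 : ℝ)) * ((pts j).1 : ℝ) := by
          nlinarith [hch]
        exact_mod_cast hre
      · subst hkj
        exact le_rfl
      · rcases Nat.lt_or_ge (j+1) k with hk1 | hk1
        · have hA : pts j ∈ S := (hptsS j (le_of_lt hj)).1
          have hB : pts k ∈ S := (hptsS k hk).1
          have hPU := (hptsS (j+1) hj1).2
          have h1 : (pts j).1 < (pts (j+1)).1 := hmono j (j+1) (Nat.lt_succ_self j) hj1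
          have h2 : (pts (j+1)).1 < (pts k).1 := hmono (j+1) k hk1 hk
          have hch := sl_chord S (pts (j+1)) (pts j) (pts k) hA hB hPU h1 h2
          have hre : (((pts (j+1)).1 : ℝ) - ((pts j).1 : ℝ)) * ((pts k).2 : ℝ)
                - (((pts (j+1)).2 : ℝ) - ((pts j).2 : ℝ)) * ((pts k).1 : ℝ)
              ≤ (((pts (j+1)).1 : ℝ) - ((pts j).1 : ℝ)) * ((pts j).2 : ℝ)
                - (((pts (j+1)).2 : ℝ) - ((pts j).2 : ℝ)) * ((pts j).1 : ℝ) := by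
            nlinarith [hch]
          exact_mod_cast hre
        · have hkeq : k = j + 1 := le_antisymm hk1 (by omega)
          subst hkeq
          apply le_of_eq
          ring
    exact le_trans (hpmmax p hp) hkey
  -- extreme x-coordinates
  have hxmin : ∀ p ∈ S, (pts 0).1 ≤ p.1 := by
    obtain ⟨w, hwS, hwU, hwmin⟩ := sl_minx S hfin hne
    obtain ⟨k, hk, hwk⟩ := (henum w).1 ((hU w).2 ⟨hwS, hwU⟩)
    intro p hp
    rcases Nat.eq_zero_or_pos k with hk0 | hkpos
    · subst hk0
      rw [hwk] at hwmin
      exact hwmin p hp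
    · exfalso
      have h1 := hmono 0 k hkpos hk
      have h2 := hwmin (pts 0) (hptsS 0 (Nat.zero_le _)).1
      rw [hwk] at h2
      omega
  have hxmax : ∀ p ∈ S, p.1 ≤ (pts ℓ).1 := by
    obtain ⟨w, hwS, hwU, hwmax⟩ := sl_maxx S hfin hne
    obtain ⟨k, hk, hwk⟩ := (henum w).1 ((hU w).2 ⟨hwS, hwU⟩)
    intro p hp
    rcases Nat.eq_or_lt_of_le hk with hk0 | hkpos
    · subst hk0
      rw [hwk] at hwmax
      exact hwmax p hp
    · exfalso
      have h1 := hmono k ℓ hkpos le_rfl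
      have h2 := hwmax (pts ℓ) (hptsS ℓ le_rfl).1
      rw [hwk] at h2
      omega
  -- coordinates
  set Pσ : ℤ × ℤ := diagPoint n r m G σ with hPσdef
  set a : ℤ := (pts i).1 - Pσ.1 with hadef
  set b : ℤ := (pts i).2 - Pσ.2 with hbdef
  have hPσ1 : Pσ.1 = ((n * r + m : ℕ) : ℤ) - ((σ.parts.card + m : ℕ) : ℤ) := rfl
  have hPσ2 : Pσ.2 = ((n * Nat.card G.edgeSet : ℕ) : ℤ)
      - ((Nat.card (rhoGraph n r m G σ).edgeSet : ℕ) : ℤ) := rfl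
  have hPρ1 : (pts i).1 = ((n * r + m : ℕ) : ℤ) - ((ρ.parts.card + m : ℕ) : ℤ) := by
    rw [← hpt]; rfl
  have hPρ2 : (pts i).2 = ((n * Nat.card G.edgeSet : ℕ) : ℤ)
      - ((Nat.card (rhoGraph n r m G ρ).edgeSet : ℕ) : ℤ) := by
    rw [← hpt]; rfl
  have hva : ((σ.parts.card + m : ℕ) : ℤ) = ((ρ.parts.card + m : ℕ) : ℤ) + a := by
    rw [hadef, hPσ1, hPρ1]; ring
  have heb : ((Nat.card (rhoGraph n r m G σ).edgeSet : ℕ) : ℤ)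
      = ((Nat.card (rhoGraph n r m G ρ).edgeSet : ℕ) : ℤ) + b := by
    rw [hbdef, hPσ2, hPρ2]; ring
  rcases lt_trichotomy a 0 with haneg | hazero | hapos
  · -- a < 0 : x_σ > x_i, need i < ℓ, use right slope
    have hiℓ : i ≠ ℓ := by
      intro hieq
      subst hieq
      have := hxmax Pσ hσS
      omega
    have hBo := hb.resolve_left hiℓ
    rw [isBigO_iff] at hBo
    obtain ⟨C, hC⟩ := hBo
    have hil' : i < ℓ := lt_of_le_of_ne hil hiℓ
    have hcc := hconc i hil' Pσ hσS
    have hd : 0 < (pts (i+1)).1 - (pts i).1 :=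
      sub_pos.2 (hmono i (i+1) (Nat.lt_succ_self i) hil')
    have hZ : ((pts (i+1)).2 - (pts i).2) * a ≤ b * ((pts (i+1)).1 - (pts i).1) := by
      rw [hadef, hbdef]
      nlinarith [hcc]
    set q : ℝ := (((pts (i + 1)).2 - (pts i).2 : ℤ) : ℝ)
        / (((pts (i + 1)).1 - (pts i).1 : ℤ) : ℝ) with hqdef
    have hd' : (0 : ℝ) < (((pts (i+1)).1 - (pts i).1 : ℤ) : ℝ) := by exact_mod_cast hd
    have hqa : q * (a : ℝ) ≤ (b : ℝ) := by
      rw [hqdef, div_mul_eq_mul_div, div_le_iff₀ hd']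
      exact_mod_cast hZ
    apply sl_bigO c _ _ _ _ a b hva heb ((1 / C) ^ ((a : ℤ) : ℝ)) hc
    filter_upwards [hC, eventually_ge_atTop (1 : ℝ)] with lam h1 h2
    have hl0 : (0 : ℝ) < lam := lt_of_lt_of_le one_pos h2
    obtain ⟨hcl0, hcl1⟩ := hc lam hl0
    have hfpos : 0 < lam * c lam ^ q := by positivity
    rw [norm_one, Real.norm_of_nonneg hfpos.le] at h1
    have hCpos : 0 < C := by nlinarith
    have hf : 1 / C ≤ lam * c lam ^ q := by
      rw [div_le_iff₀ hCpos]
      nlinarith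
    have hkey := sl_key lam (c lam) q ((a : ℤ) : ℝ) ((b : ℤ) : ℝ) h2 hcl0 hcl1 hqa
    have hle : (lam * c lam ^ q) ^ ((a : ℤ) : ℝ) ≤ (1 / C) ^ ((a : ℤ) : ℝ) :=
      Real.rpow_le_rpow_of_nonpos (by positivity) hf (by exact_mod_cast haneg.le)
    linarith [hkey, hle]
  · -- a = 0
    have hb0 : 0 ≤ b := by
      have hσhull : slCast Pσ ∈ convexHull ℝ (slCast '' S) :=
        subset_convexHull ℝ _ ⟨Pσ, hσS, rfl⟩
      have hx : Pσ.1 = (pts i).1 := by omega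
      have h1 := (hptsS i hil).2 (slCast Pσ) hσhull
        (by show ((Pσ.1 : ℝ)) = ((pts i).1 : ℝ); exact_mod_cast hx)
      have h2 : (Pσ.2 : ℝ) ≤ ((pts i).2 : ℝ) := h1
      have h3 : Pσ.2 ≤ (pts i).2 := by exact_mod_cast h2
      omega
    have hv : σ.parts.card + m = ρ.parts.card + m := by omega
    have he : Nat.card (rhoGraph n r m G ρ).edgeSet
        ≤ Nat.card (rhoGraph n r m G σ).edgeSet := by omega
    rw [isBigO_iff]
    refine ⟨1, ?_⟩
    filter_upwards [eventually_ge_atTop (1 : ℝ)] with lam h1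
    have hl0 : (0 : ℝ) < lam := lt_of_lt_of_le one_pos h1
    obtain ⟨hcl0, hcl1⟩ := hc lam hl0
    rw [Real.norm_of_nonneg (by positivity), Real.norm_of_nonneg (by positivity), one_mul, hv]
    exact mul_le_mul_of_nonneg_left
      (pow_le_pow_of_le_one hcl0.le hcl1.le he) (by positivity)
  · -- 0 < a : x_σ < x_i, need i > 0, use left slope
    have hi0 : i ≠ 0 := by
      intro hieq
      subst hieq
      have := hxmin Pσ hσS
      omega
    have hAo := ha.resolve_left hi0
    rw [isBigO_iff] at hAo
    obtain ⟨C, hC⟩ := hAo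
    have hipos : 0 < i := Nat.pos_of_ne_zero hi0
    have hj1 : i - 1 + 1 = i := Nat.succ_pred_eq_of_pos hipos
    have hjℓ : i - 1 < ℓ := by omega
    have hcc := hconc (i-1) hjℓ Pσ hσS
    rw [hj1] at hcc
    have hd : 0 < (pts i).1 - (pts (i-1)).1 := by
      have := hmono (i-1) i (by omega) hil
      omega
    have hZ : ((pts i).2 - (pts (i-1)).2) * a ≤ b * ((pts i).1 - (pts (i-1)).1) := by
      rw [hadef, hbdef]
      nlinarith [hcc]
    set q : ℝ := (((pts i).2 - (pts (i - 1)).2 : ℤ) : ℝ)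
        / (((pts i).1 - (pts (i - 1)).1 : ℤ) : ℝ) with hqdef
    have hd' : (0 : ℝ) < (((pts i).1 - (pts (i-1)).1 : ℤ) : ℝ) := by exact_mod_cast hd
    have hqa : q * (a : ℝ) ≤ (b : ℝ) := by
      rw [hqdef, div_mul_eq_mul_div, div_le_iff₀ hd']
      exact_mod_cast hZ
    apply sl_bigO c _ _ _ _ a b hva heb ((max C 0) ^ ((a : ℤ) : ℝ)) hc
    filter_upwards [hC, eventually_ge_atTop (1 : ℝ)] with lam h1 h2
    have hl0 : (0 : ℝ) < lam := lt_of_lt_of_le one_pos h2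
    obtain ⟨hcl0, hcl1⟩ := hc lam hl0
    have hfpos : 0 < lam * c lam ^ q := by positivity
    rw [Real.norm_of_nonneg hfpos.le, norm_one, mul_one] at h1
    have hkey := sl_key lam (c lam) q ((a : ℤ) : ℝ) ((b : ℤ) : ℝ) h2 hcl0 hcl1 hqa
    have hle : (lam * c lam ^ q) ^ ((a : ℤ) : ℝ) ≤ (max C 0) ^ ((a : ℤ) : ℝ) :=
      Real.rpow_le_rpow hfpos.le (le_trans h1 (le_max_left _ _)) (by exact_mod_cast hapos.le)
    linarith [hkey, hle]
end

section
/- Let n ≥ 2 and r ≥ 1, and let ρ be a connected partition of [n]×[r]. Then there exists i ∈ [n] such that the collection {b ∖ π_i : b ∈ ρ, b ∖ π_i ≠ ∅} is a partition of ([n]∖{i}) × [r] which is connected with respect to the partition of ([n]∖{i}) × [r] into its rows. -/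
open Finset

/-- A set partition `ρ` of a set `s ⊆ [n] × [r]` is *connected* (with respect to the
partition of `s` into its rows) if the equivalence relation generated by
"in `s` and in the same row, or in a common block of `ρ`" relates any two points of `s`,
i.e. `ρ ∨ π = ⊤` in the lattice of partitions of `s`. -/
def ConnOn {n r : ℕ} {s : Finset (Fin n × Fin r)} (ρ : Finpartition s) : Prop :=
  ∀ p ∈ s, ∀ q ∈ s,
    Relation.EqvGen
      (fun a b => (a ∈ s ∧ b ∈ s ∧ a.1 = b.1) ∨ ∃ t ∈ ρ.parts, a ∈ t ∧ b ∈ t) p q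

section Aux

variable {n r : ℕ}

/-- The row graph of a partition: rows `i ≠ j` are adjacent when some block meets both. -/
private def rowGraph (ρ : Finpartition (Finset.univ : Finset (Fin n × Fin r))) :
    SimpleGraph (Fin n) where
  Adj i j := i ≠ j ∧ ∃ t ∈ ρ.parts, (∃ p ∈ t, (p : Fin n × Fin r).1 = i) ∧ ∃ q ∈ t, q.1 = j
  symm := by
    constructor; rintro i j ⟨hne, t, ht, hp, hq⟩
    exact ⟨hne.symm, t, ht, hq, hp⟩
  loopless := by constructor; rintro i ⟨hne, -⟩; exact hne rfl

private lemma rowGraph_connected (hn : 2 ≤ n) (hr : 1 ≤ r)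
    (ρ : Finpartition (Finset.univ : Finset (Fin n × Fin r)))
    (hconn : ConnOn ρ) : (rowGraph ρ).Connected := by
  have hnpos : 0 < n := by omega
  have : Nonempty (Fin n) := ⟨⟨0, hnpos⟩⟩
  refine ⟨fun u v => ?_⟩
  have key : ∀ a b : Fin n × Fin r,
      Relation.EqvGen
        (fun a b => (a ∈ (Finset.univ : Finset (Fin n × Fin r)) ∧ b ∈ Finset.univ ∧ a.1 = b.1)
          ∨ ∃ t ∈ ρ.parts, a ∈ t ∧ b ∈ t) a b → (rowGraph ρ).Reachable a.1 b.1 := by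
    intro a b h
    induction h with
    | rel a b hab =>
      rcases hab with ⟨-, -, h1⟩ | ⟨t, ht, hat, hbt⟩
      · rw [h1]
      · by_cases h1 : a.1 = b.1
        · rw [h1]
        · exact SimpleGraph.Adj.reachable ⟨h1, t, ht, ⟨a, hat, rfl⟩, ⟨b, hbt, rfl⟩⟩
    | refl a => exact SimpleGraph.Reachable.refl _
    | symm a b _ ih => exact ih.symm
    | trans a b c _ _ ih1 ih2 => exact ih1.trans ih2
  exact key (u, ⟨0, hr⟩) (v, ⟨0, hr⟩)
    (hconn _ (Finset.mem_univ _) _ (Finset.mem_univ _))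

/-- In a connected graph on at least two vertices there is a non-cut vertex: a vertex `i`
such that every other vertex is joined to a fixed base by a walk avoiding `i`. -/
private lemma exists_noncut {V : Type*} [Fintype V] [Nonempty V] {G : SimpleGraph V}
    (hG : G.Connected) :
    ∃ i : V, ∀ j k : V, j ≠ i → k ≠ i →
      ∃ w : G.Walk j k, i ∉ w.support := by
  classical
  obtain ⟨b⟩ : Nonempty V := inferInstance
  obtain ⟨i, hi⟩ := Finite.exists_max (fun v => G.dist b v)
  refine ⟨i, ?_⟩
  have main : ∀ m : ℕ, ∀ j : V, j ≠ i → G.dist b j ≤ m →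
      ∃ w : G.Walk b j, i ∉ w.support := by
    intro m
    induction m with
    | zero =>
      intro j hj hle
      have hj0 : G.dist b j = 0 := Nat.le_zero.mp hle
      have hjb : j = b := (hG.dist_eq_zero_iff.mp hj0).symm
      subst hjb
      exact ⟨SimpleGraph.Walk.nil, by simpa using Ne.symm hj⟩
    | succ m ih =>
      intro j hj hle
      by_cases h0 : G.dist b j = 0
      · have hjb : j = b := (hG.dist_eq_zero_iff.mp h0).symm
        subst hjb
        exact ⟨SimpleGraph.Walk.nil, by simpa using Ne.symm hj⟩
      · have hjb : j ≠ b := fun h => h0 (by rw [h]; exact hG.dist_eq_zero_iff.mpr rfl)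
        obtain ⟨w, hw⟩ := hG.exists_walk_length_eq_dist j b
        obtain ⟨x, hadj, w', hw'⟩ := SimpleGraph.Walk.exists_eq_cons_of_ne hjb w
        have hlen : w'.length = G.dist j b - 1 := by
          rw [← hw]; subst hw'; simp
        have hxle : G.dist b x ≤ G.dist j b - 1 := by
          rw [SimpleGraph.dist_comm, ← hlen]
          exact SimpleGraph.dist_le _
        have hdj : G.dist b j = G.dist j b := SimpleGraph.dist_comm
        have hxlt : G.dist b x < G.dist b j := by omega
        have hxi : x ≠ i := by
          intro h
          subst h
          exact absurd (hi j) (by omega)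
        obtain ⟨wbx, hwbx⟩ := ih x hxi (by omega)
        refine ⟨wbx.concat hadj.symm, ?_⟩
        rw [SimpleGraph.Walk.support_concat]
        intro hmem
        rcases List.mem_append.mp hmem with h | h
        · exact hwbx h
        · have : i = j := by simpa using h
          exact hj this.symm
  intro j k hj hk
  obtain ⟨wj, hwj⟩ := main (G.dist b j) j hj le_rfl
  obtain ⟨wk, hwk⟩ := main (G.dist b k) k hk le_rfl
  refine ⟨wj.reverse.append wk, ?_⟩
  rw [SimpleGraph.Walk.support_append]
  intro hmem
  rcases List.mem_append.mp hmem with h | h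
  · exact hwj (by simpa using h)
  · exact hwk (List.mem_of_mem_tail h)

end Aux

/-- For `n ≥ 2`, `r ≥ 1` and any connected partition `ρ` of `[n] × [r]` there exists a row
index `i ∈ [n]` such that the partition `{b ∖ π_i : b ∈ ρ, b ∖ π_i ≠ ∅}` of
`([n] ∖ {i}) × [r]` (obtained by `Finpartition.avoid`) is connected with respect to the
remaining rows. -/
theorem statement3 (n r : ℕ) (hn : 2 ≤ n) (hr : 1 ≤ r)
    (ρ : Finpartition (Finset.univ : Finset (Fin n × Fin r)))
    (hconn : ConnOn ρ) :
    ∃ i : Fin n,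
      ConnOn (ρ.avoid (Finset.univ.filter fun p : Fin n × Fin r => p.1 = i)) := by
  classical
  have hG := rowGraph_connected hn hr ρ hconn
  have : Nonempty (Fin n) := ⟨⟨0, by omega⟩⟩
  obtain ⟨i, hi⟩ := exists_noncut hG
  refine ⟨i, ?_⟩
  set rowi : Finset (Fin n × Fin r) :=
    Finset.univ.filter fun p : Fin n × Fin r => p.1 = i with hrowi
  set s' : Finset (Fin n × Fin r) := Finset.univ \ rowi with hs'
  -- membership in s' is just "not in row i"
  have hmem_s' : ∀ p : Fin n × Fin r, p ∈ s' ↔ p.1 ≠ i := by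
    intro p
    simp [hs', hrowi]
  set S' : Fin n × Fin r → Fin n × Fin r → Prop := fun a b =>
    (a ∈ s' ∧ b ∈ s' ∧ a.1 = b.1) ∨ ∃ t ∈ (ρ.avoid rowi).parts, a ∈ t ∧ b ∈ t with hS'
  -- a block of ρ containing a point off row i gives a block of the avoided partition
  have hblock : ∀ t ∈ ρ.parts, ∀ a ∈ t, (a : Fin n × Fin r).1 ≠ i →
      t \ rowi ∈ (ρ.avoid rowi).parts ∧ a ∈ t \ rowi := by
    intro t ht a ha hai
    have hat : a ∈ t \ rowi := by
      simp only [Finset.mem_sdiff, hrowi, Finset.mem_filter]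
      exact ⟨ha, fun h => hai h.2⟩
    refine ⟨?_, hat⟩
    rw [Finpartition.mem_avoid]
    exact ⟨t, ht, fun hle => hai (Finset.mem_filter.mp (hle ha)).2, rfl⟩
  intro p hp q hq
  -- turn a walk avoiding i into an EqvGen chain
  have walk_to_chain : ∀ (j k : Fin n) (w : (rowGraph ρ).Walk j k), i ∉ w.support →
      ∀ p : Fin n × Fin r, p ∈ s' → p.1 = j →
      ∀ q : Fin n × Fin r, q ∈ s' → q.1 = k → Relation.EqvGen S' p q := by
    intro j k w
    induction w with
    | nil =>
      intro hsup p hp hpj q hq hqk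
      exact Relation.EqvGen.rel _ _ (Or.inl ⟨hp, hq, by rw [hpj, hqk]⟩)
    | @cons j x k hadj w ih =>
      intro hsup p hp hpj q hq hqk
      rw [SimpleGraph.Walk.support_cons] at hsup
      have hij : i ≠ j := fun h => hsup (by rw [h]; exact List.mem_cons_self)
      have hsup' : i ∉ w.support := fun h => hsup (List.mem_cons_of_mem _ h)
      have hix : i ≠ x := fun h =>
        hsup' (by rw [h]; exact SimpleGraph.Walk.start_mem_support w)
      obtain ⟨-, t, ht, ⟨a, hat, haj⟩, ⟨c, hct, hcx⟩⟩ := hadj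
      have hai : a.1 ≠ i := by rw [haj]; exact fun h => hij h.symm
      have hci : c.1 ≠ i := by rw [hcx]; exact fun h => hix h.symm
      obtain ⟨htav, hatav⟩ := hblock t ht a hat hai
      have hctav : c ∈ t \ rowi := by
        simp only [Finset.mem_sdiff, hrowi, Finset.mem_filter]
        exact ⟨hct, fun h => hci h.2⟩
      have has' : a ∈ s' := (hmem_s' a).mpr hai
      have hcs' : c ∈ s' := (hmem_s' c).mpr hci
      have h1 : Relation.EqvGen S' p a :=
        Relation.EqvGen.rel _ _ (Or.inl ⟨hp, has', by rw [hpj, haj]⟩)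
      have h2 : Relation.EqvGen S' a c :=
        Relation.EqvGen.rel _ _ (Or.inr ⟨t \ rowi, htav, hatav, hctav⟩)
      have h3 : Relation.EqvGen S' c q := ih hsup' c hcs' hcx q hq hqk
      exact h1.trans _ _ _ (h2.trans _ _ _ h3)
  have hpi : p.1 ≠ i := (hmem_s' p).mp hp
  have hqi : q.1 ≠ i := (hmem_s' q).mp hq
  obtain ⟨w, hw⟩ := hi p.1 q.1 hpi hqi
  exact walk_to_chain p.1 q.1 w hw p hp rfl q hq rfl
end

section
/- For all integers n, r ≥ 1, the number of connected non-flat partitions of [n]×[r] satisfies |CNF(n,r)| ≤ (n!)^r · (r!)^{n−1}. -/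
open Finset

namespace Statement4Aux

open scoped Classical

variable {n r : ℕ}

abbrev Pt (n r : ℕ) := Fin n × Fin r

variable (ρ ρ' : Finpartition (Finset.univ : Finset (Pt n r)))

/-- same-block relation -/
def brel (p q : Pt n r) : Prop := ∃ t ∈ ρ.parts, p ∈ t ∧ q ∈ t

lemma brel_refl (p : Pt n r) : brel ρ p p := by
  obtain ⟨t, ht, hp⟩ := ρ.exists_mem (Finset.mem_univ p)
  exact ⟨t, ht, hp, hp⟩

lemma brel_symm {p q : Pt n r} (h : brel ρ p q) : brel ρ q p := by
  obtain ⟨t, ht, hp, hq⟩ := h; exact ⟨t, ht, hq, hp⟩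

lemma brel_trans {p q s : Pt n r} (h : brel ρ p q) (h' : brel ρ q s) : brel ρ p s := by
  obtain ⟨t, ht, hp, hq⟩ := h
  obtain ⟨t', ht', hq', hs⟩ := h'
  exact ⟨t, ht, hp, (ρ.eq_of_mem_parts ht' ht hq' hq) ▸ hs⟩

lemma brel_row (hNF : IsNonFlat ρ) {p q : Pt n r} (h : brel ρ p q) (hrow : p.1 = q.1) :
    p = q := by
  obtain ⟨t, ht, hp, hq⟩ := h
  exact hNF t ht p hp q hq hrow

noncomputable def above (p : Pt n r) : Finset (Pt n r) :=
  univ.filter (fun q => brel ρ p q ∧ p.1 < q.1)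

lemma mem_above {p q : Pt n r} : q ∈ above ρ p ↔ brel ρ p q ∧ p.1 < q.1 := by
  simp [above]

noncomputable def child (p : Pt n r) : Option (Pt n r) :=
  if h : (above ρ p).Nonempty then
    some (Finset.exists_min_image (above ρ p) (fun q => q.1.val) h).choose
  else none

lemma child_spec {p q : Pt n r} (h : child ρ p = some q) :
    q ∈ above ρ p ∧ ∀ q' ∈ above ρ p, q.1.val ≤ q'.1.val := by
  unfold child at h
  split_ifs at h with hne
  · obtain ⟨h1, h2⟩ := (Finset.exists_min_image (above ρ p) (fun q => q.1.val) hne).choose_spec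
    cases h; exact ⟨h1, h2⟩

lemma child_none {p : Pt n r} (h : child ρ p = none) {q : Pt n r} (hq : q ∈ above ρ p) :
    False := by
  unfold child at h
  split_ifs at h with hne
  exact hne ⟨q, hq⟩

lemma child_isSome {p q : Pt n r} (hq : q ∈ above ρ p) : ∃ c, child ρ p = some c := by
  cases h : child ρ p with
  | none => exact absurd (child_none ρ h hq) (by simp)
  | some c => exact ⟨c, rfl⟩

lemma child_inj (hNF : IsNonFlat ρ) {p p' q : Pt n r}
    (h : child ρ p = some q) (h' : child ρ p' = some q) : p = p' := by
  obtain ⟨hq, hmin⟩ := child_spec ρ h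
  obtain ⟨hq', hmin'⟩ := child_spec ρ h'
  rw [mem_above] at hq hq'
  by_contra hne
  have hbrel : brel ρ p p' := brel_trans ρ hq.1 (brel_symm ρ hq'.1)
  have hrowne : p.1 ≠ p'.1 := fun hh => hne (brel_row ρ hNF hbrel hh)
  rcases lt_or_gt_of_ne hrowne with hlt | hgt
  · have : p' ∈ above ρ p := (mem_above ρ).2 ⟨hbrel, hlt⟩
    have := hmin p' this
    have := hq'.2
    omega
  · have : p ∈ above ρ p' := (mem_above ρ).2 ⟨brel_symm ρ hbrel, hgt⟩
    have := hmin' p this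
    have := hq.2
    omega

def step (a b : Pt n r) : Prop := child ρ a = some b

lemma brel_of_reach {p q : Pt n r} (h : Relation.ReflTransGen (step ρ) p q) :
    brel ρ p q := by
  induction h with
  | refl => exact brel_refl ρ p
  | tail _ hstep ih =>
      exact brel_trans ρ ih ((mem_above ρ).1 (child_spec ρ hstep).1).1

lemma reach_of_brel (hNF : IsNonFlat ρ) :
    ∀ (d : ℕ) (p q : Pt n r), brel ρ p q → p.1 < q.1 → q.1.val - p.1.val ≤ d →
      Relation.ReflTransGen (step ρ) p q := by
  intro d
  induction d with
  | zero => intro p q _ h1 h2; omega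
  | succ d ih =>
      intro p q hb hlt hd
      have hqa : q ∈ above ρ p := (mem_above ρ).2 ⟨hb, hlt⟩
      obtain ⟨c, hc⟩ := child_isSome ρ hqa
      obtain ⟨hca, hmin⟩ := child_spec ρ hc
      rw [mem_above] at hca
      by_cases hcq : c = q
      · exact Relation.ReflTransGen.single (hcq ▸ hc)
      · have hbcq : brel ρ c q := brel_trans ρ (brel_symm ρ hca.1) hb
        have hne : c.1.val ≠ q.1.val := by
          intro hh
          exact hcq (brel_row ρ hNF hbcq (Fin.ext hh))
        have hle := hmin q hqa
        have h1 : c.1 < q.1 := by omega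
        have h2 : p.1 < c.1 := hca.2
        exact Relation.ReflTransGen.head hc (ih c q hbcq h1 (by omega))

lemma brel_mono_of_child_eq (hNF : IsNonFlat ρ) (hch : ∀ p, child ρ p = child ρ' p)
    {p q : Pt n r} (h : brel ρ p q) : brel ρ' p q := by
  have key : ∀ a b : Pt n r, a.1 < b.1 → brel ρ a b → brel ρ' a b := by
    intro a b hab hb
    have := reach_of_brel ρ hNF (b.1.val - a.1.val) a b hb hab le_rfl
    have hreach : Relation.ReflTransGen (step ρ') a b := by
      refine Relation.ReflTransGen.mono ?_ _ _ this
      intro x y hxy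
      unfold step at hxy ⊢
      rw [← hch x]; exact hxy
    exact brel_of_reach ρ' hreach
  rcases lt_trichotomy p.1 q.1 with hlt | heq | hgt
  · exact key p q hlt h
  · rw [brel_row ρ hNF h heq]; exact brel_refl ρ' q
  · exact brel_symm ρ' (key q p hgt (brel_symm ρ h))

lemma block_eq_filter {b : Finset (Pt n r)} (hb : b ∈ ρ.parts) {p : Pt n r} (hp : p ∈ b) :
    b = univ.filter (fun q => brel ρ p q) := by
  ext q
  simp only [Finset.mem_filter, Finset.mem_univ, true_and]
  constructor
  · intro hq; exact ⟨b, hb, hp, hq⟩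
  · rintro ⟨t, ht, hpt, hqt⟩
    exact (ρ.eq_of_mem_parts ht hb hpt hp) ▸ hqt

lemma mem_parts_of_brel_imp (hNF : IsNonFlat ρ) (hNF' : IsNonFlat ρ')
    (hch : ∀ p, child ρ p = child ρ' p) {b : Finset (Pt n r)} (hb : b ∈ ρ.parts) :
    b ∈ ρ'.parts := by
  obtain ⟨p, hp⟩ := ρ.nonempty_of_mem_parts hb
  obtain ⟨t, ht, hpt⟩ := ρ'.exists_mem (Finset.mem_univ p)
  have h1 : b = univ.filter (fun q => brel ρ p q) := block_eq_filter ρ hb hp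
  have h2 : t = univ.filter (fun q => brel ρ' p q) := block_eq_filter ρ' ht hpt
  have h3 : b = t := by
    rw [h1, h2]
    apply Finset.filter_congr
    intro q _
    constructor
    · exact fun h => brel_mono_of_child_eq ρ ρ' hNF hch h
    · exact fun h => brel_mono_of_child_eq ρ' ρ hNF' (fun p => (hch p).symm) h
  exact h3 ▸ ht

lemma eq_of_child_eq (hNF : IsNonFlat ρ) (hNF' : IsNonFlat ρ')
    (hch : ∀ p, child ρ p = child ρ' p) : ρ = ρ' := by
  apply Finpartition.ext
  ext b
  constructor
  · exact fun hb => mem_parts_of_brel_imp ρ ρ' hNF hNF' hch hb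
  · exact fun hb => mem_parts_of_brel_imp ρ' ρ hNF' hNF (fun p => (hch p).symm) hb

def key (p : Pt n r) : ℕ := p.1.val * r + p.2.val

lemma key_inj {p q : Pt n r} (h : key p = key q) : p = q := by
  have hp2 := p.2.isLt
  have hq2 := q.2.isLt
  have hrow : p.1.val = q.1.val := by
    by_contra hne
    rcases Nat.lt_or_ge p.1.val q.1.val with hlt | hge
    · have : p.1.val * r + r ≤ q.1.val * r := by
        calc p.1.val * r + r = (p.1.val + 1) * r := by ring
        _ ≤ q.1.val * r := Nat.mul_le_mul_right r hlt
      unfold key at h; omega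
    · have hlt : q.1.val < p.1.val := by omega
      have : q.1.val * r + r ≤ p.1.val * r := by
        calc q.1.val * r + r = (q.1.val + 1) * r := by ring
        _ ≤ p.1.val * r := Nat.mul_le_mul_right r hlt
      unfold key at h; omega
  have hcol : p.2.val = q.2.val := by
    have hh : p.1.val * r = q.1.val * r := by rw [hrow]
    unfold key at h; omega
  exact Prod.ext (Fin.ext hrow) (Fin.ext hcol)

noncomputable def rank (S : Finset (Pt n r)) (p : Pt n r) : ℕ :=
  (S.filter (fun q => key q < key p)).card

lemma rank_lt_card {S : Finset (Pt n r)} {p : Pt n r} (hp : p ∈ S) : rank S p < S.card := by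
  apply Finset.card_lt_card
  constructor
  · exact Finset.filter_subset _ _
  · intro hsub
    have := hsub hp
    simp at this

lemma rank_lt_of_key_lt {S : Finset (Pt n r)} {p q : Pt n r} (hp : p ∈ S) (hq : q ∈ S)
    (h : key p < key q) : rank S p < rank S q := by
  apply Finset.card_lt_card
  constructor
  · intro x hx
    simp only [Finset.mem_filter] at hx ⊢
    exact ⟨hx.1, hx.2.trans h⟩
  · intro hsub
    have : p ∈ S.filter (fun q' => key q' < key p) := hsub (by simp [hp, h])
    simp at this

lemma rank_injOn {S : Finset (Pt n r)} : Set.InjOn (rank S) S := by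
  intro p hp q hq h
  by_contra hne
  have : key p ≠ key q := fun hh => hne (key_inj hh)
  rcases Nat.lt_or_ge (key p) (key q) with hlt | hge
  · have := rank_lt_of_key_lt hp hq hlt; omega
  · have hlt : key q < key p := by omega
    have := rank_lt_of_key_lt hq hp hlt; omega

lemma exists_perm_extend {β : Type*} (a b : β → Fin r) :
    ∀ (S : Finset β), Set.InjOn a S → Set.InjOn b S →
      ∃ τ : Equiv.Perm (Fin r), ∀ p ∈ S, τ (a p) = b p := by
  intro S
  induction S using Finset.induction_on with
  | empty => intro _ _; exact ⟨1, by simp⟩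
  | @insert p S hps ih =>
      intro ha hb
      obtain ⟨τ', hτ'⟩ := ih (ha.mono (Finset.coe_subset.2 (Finset.subset_insert p S)))
        (hb.mono (Finset.coe_subset.2 (Finset.subset_insert p S)))
      refine ⟨Equiv.swap (τ' (a p)) (b p) * τ', ?_⟩
      intro x hx
      rcases Finset.mem_insert.1 hx with rfl | hxS
      · simp [Equiv.swap_apply_left]
      · have hxne : x ≠ p := fun hh => hps (hh ▸ hxS)
        have h1 : τ' (a x) = b x := hτ' x hxS
        have h2 : b x ≠ b p := fun hh =>
          hxne (hb (Finset.mem_insert.2 (Or.inr hxS)) (Finset.mem_insert_self p S) hh)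
        have h3 : a x ≠ a p := fun hh =>
          hxne (ha (Finset.mem_insert.2 (Or.inr hxS)) (Finset.mem_insert_self p S) hh)
        have h4 : b x ≠ τ' (a p) := by
          rw [← h1]; exact fun hh => h3 (τ'.injective hh)
        simp only [Equiv.Perm.mul_apply, h1]
        exact Equiv.swap_apply_of_ne_of_ne h4 h2

noncomputable def Srcs (i : ℕ) : Finset (Pt n r) :=
  univ.filter (fun p => ∃ q, child ρ p = some q ∧ q.1.val = i)

lemma mem_Srcs {i : ℕ} {p : Pt n r} :
    p ∈ Srcs ρ i ↔ ∃ q, child ρ p = some q ∧ q.1.val = i := by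
  simp [Srcs]

/-- the column of the child (junk value `⟨0, hr⟩` if no child) -/
noncomputable def colF (hr : 1 ≤ r) (p : Pt n r) : Fin r :=
  (child ρ p).elim ⟨0, hr⟩ (fun q => q.2)

lemma colF_injOn (hNF : IsNonFlat ρ) (hr : 1 ≤ r) (i : ℕ) :
    Set.InjOn (colF ρ hr) (Srcs ρ i) := by
  intro p hp p' hp' h
  obtain ⟨q, hq, hqi⟩ := (mem_Srcs ρ).1 (by exact_mod_cast hp)
  obtain ⟨q', hq', hqi'⟩ := (mem_Srcs ρ).1 (by exact_mod_cast hp')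
  have hcol : q.2 = q'.2 := by
    simpa [colF, hq, hq'] using h
  have : q = q' := Prod.ext (Fin.ext (hqi.trans hqi'.symm)) hcol
  exact child_inj ρ hNF hq (this ▸ hq')

lemma card_Srcs_le (hNF : IsNonFlat ρ) (hr : 1 ≤ r) (i : ℕ) : (Srcs ρ i).card ≤ r := by
  have := Finset.card_le_card_of_injOn (colF ρ hr)
    (fun p _ => Finset.mem_univ _) (colF_injOn ρ hNF hr i)
  simpa using this

noncomputable def rankF (hr : 1 ≤ r) (S : Finset (Pt n r)) (p : Pt n r) : Fin r :=
  ⟨min (rank S p) (r - 1), by omega⟩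

lemma rankF_injOn (hr : 1 ≤ r) {S : Finset (Pt n r)} (hS : S.card ≤ r) :
    Set.InjOn (rankF hr S) S := by
  intro p hp q hq h
  have h1 : rank S p < S.card := rank_lt_card hp
  have h2 : rank S q < S.card := rank_lt_card hq
  have : rank S p = rank S q := by
    have := congrArg Fin.val h
    simp only [rankF] at this
    omega
  exact rank_injOn hp hq this

lemma exists_tau (hNF : IsNonFlat ρ) (hr : 1 ≤ r) (i : ℕ) :
    ∃ τ : Equiv.Perm (Fin r),
      ∀ p ∈ Srcs ρ i, τ (rankF hr (Srcs ρ i) p) = colF ρ hr p :=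
  exists_perm_extend _ _ (Srcs ρ i) (rankF_injOn hr (card_Srcs_le ρ hNF hr i))
    (colF_injOn ρ hNF hr i)

noncomputable def code1 (p : Pt n r) : Fin (n - p.1.val) :=
  ⟨(child ρ p).elim 0 (fun q => q.1.val - p.1.val), by
    have h1 := p.1.isLt
    cases h : child ρ p with
    | none => simp only [Option.elim_none]; omega
    | some q => have := q.1.isLt; simp only [Option.elim_some]; omega⟩

lemma code1_val {p q : Pt n r} (h : child ρ p = some q) :
    (code1 ρ p).val = q.1.val - p.1.val := by simp [code1, h]

lemma code1_val_none {p : Pt n r} (h : child ρ p = none) : (code1 ρ p).val = 0 := by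
  simp [code1, h]

lemma child_row_gt {p q : Pt n r} (h : child ρ p = some q) : p.1 < q.1 :=
  ((mem_above ρ).1 (child_spec ρ h).1).2

abbrev Etype (n r : ℕ) :=
  ((p : Pt n r) → Fin (n - p.1.val)) × (Fin (n - 1) → Equiv.Perm (Fin r))

noncomputable def tcode (hNF : IsNonFlat ρ) (hr : 1 ≤ r) (i : Fin (n - 1)) :
    Equiv.Perm (Fin r) :=
  (exists_tau ρ hNF hr (i.val + 1)).choose

lemma tcode_spec (hNF : IsNonFlat ρ) (hr : 1 ≤ r) (i : Fin (n - 1)) :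
    ∀ p ∈ Srcs ρ (i.val + 1),
      (tcode ρ hNF hr i) (rankF hr (Srcs ρ (i.val + 1)) p) = colF ρ hr p :=
  (exists_tau ρ hNF hr (i.val + 1)).choose_spec

lemma child_none_iff_of_code_eq (h1 : ∀ p, code1 ρ p = code1 ρ' p) (p : Pt n r)
    (h : child ρ p = none) : child ρ' p = none := by
  cases h' : child ρ' p with
  | none => rfl
  | some q =>
      have hv := code1_val ρ' h'
      have hv0 := code1_val_none ρ h
      have hgt := child_row_gt ρ' h'
      have := congrArg Fin.val (h1 p)
      omega

lemma child_row_eq_of_code_eq (h1 : ∀ p, code1 ρ p = code1 ρ' p) {p q q' : Pt n r}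
    (h : child ρ p = some q) (h' : child ρ' p = some q') : q.1 = q'.1 := by
  have hv := code1_val ρ h
  have hv' := code1_val ρ' h'
  have hg := child_row_gt ρ h
  have hg' := child_row_gt ρ' h'
  have := congrArg Fin.val (h1 p)
  exact Fin.ext (by omega)

lemma Srcs_eq_of_code_eq (h1 : ∀ p, code1 ρ p = code1 ρ' p) (i : ℕ) :
    Srcs ρ i = Srcs ρ' i := by
  ext p
  rw [mem_Srcs, mem_Srcs]
  constructor
  · rintro ⟨q, hq, rfl⟩
    cases h' : child ρ' p with
    | none =>
        have := child_none_iff_of_code_eq ρ' ρ (fun p => (h1 p).symm) p h'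
        rw [this] at hq; cases hq
    | some q' =>
        exact ⟨q', rfl, by rw [← child_row_eq_of_code_eq ρ ρ' h1 hq h']⟩
  · rintro ⟨q, hq, rfl⟩
    cases h' : child ρ p with
    | none =>
        have := child_none_iff_of_code_eq ρ ρ' h1 p h'
        rw [this] at hq; cases hq
    | some q' =>
        exact ⟨q', rfl, by rw [child_row_eq_of_code_eq ρ ρ' h1 h' hq]⟩

lemma child_eq_of_code_eq (hNF : IsNonFlat ρ) (hNF' : IsNonFlat ρ') (hr : 1 ≤ r)
    (h1 : ∀ p, code1 ρ p = code1 ρ' p)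
    (h2 : ∀ i : Fin (n - 1), tcode ρ hNF hr i = tcode ρ' hNF' hr i) (p : Pt n r) :
    child ρ p = child ρ' p := by
  cases h : child ρ p with
  | none => rw [child_none_iff_of_code_eq ρ ρ' h1 p h]
  | some q =>
      cases h' : child ρ' p with
      | none =>
          have := child_none_iff_of_code_eq ρ' ρ (fun p => (h1 p).symm) p h'
          rw [this] at h; cases h
      | some q' =>
          have hrow : q.1 = q'.1 := child_row_eq_of_code_eq ρ ρ' h1 h h'
          have hg := child_row_gt ρ h
          have hlt := q.1.isLt
          have hge : 1 ≤ q.1.val := by omega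
          set i : Fin (n - 1) := ⟨q.1.val - 1, by omega⟩ with hidef
          have hi : i.val + 1 = q.1.val := by simp [hidef]; omega
          have hpS : p ∈ Srcs ρ (i.val + 1) := (mem_Srcs ρ).2 ⟨q, h, hi.symm⟩
          have hpS' : p ∈ Srcs ρ' (i.val + 1) := by
            rw [← Srcs_eq_of_code_eq ρ ρ' h1]; exact hpS
          have hs1 := tcode_spec ρ hNF hr i p hpS
          have hs2 := tcode_spec ρ' hNF' hr i p hpS'
          rw [← Srcs_eq_of_code_eq ρ ρ' h1 (i.val + 1), ← h2 i] at hs2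
          have hcol : colF ρ hr p = colF ρ' hr p := by rw [← hs1, ← hs2]
          have hq2 : q.2 = q'.2 := by simpa [colF, h, h'] using hcol
          rw [Prod.ext hrow hq2]

noncomputable def enc (hr : 1 ≤ r)
    (x : {ρ : Finpartition (Finset.univ : Finset (Pt n r)) // IsNonFlat ρ ∧ IsConn ρ}) :
    Etype n r :=
  (fun p => code1 x.1 p, fun i => tcode x.1 x.2.1 hr i)

lemma enc_inj (hr : 1 ≤ r) :
    Function.Injective
      (enc (n := n) (r := r) hr) := by
  intro x y h
  have h1 : ∀ p, code1 x.1 p = code1 y.1 p := fun p => congrFun (congrArg Prod.fst h) p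
  have h2 : ∀ i, tcode x.1 x.2.1 hr i = tcode y.1 y.2.1 hr i :=
    fun i => congrFun (congrArg Prod.snd h) i
  exact Subtype.ext (eq_of_child_eq x.1 y.1 x.2.1 y.2.1
    (child_eq_of_code_eq x.1 y.1 x.2.1 y.2.1 hr h1 h2))

lemma prod_range_sub (m : ℕ) : ∏ i ∈ Finset.range m, (m - i) = m.factorial := by
  induction m with
  | zero => simp
  | succ m ih =>
      rw [Finset.prod_range_succ']
      have : ∀ i ∈ Finset.range m, (m + 1 - (i + 1)) = m - i := fun i _ => by omega
      rw [Finset.prod_congr rfl this, ih, Nat.sub_zero, Nat.factorial_succ, Nat.mul_comm]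

lemma card_Etype : Nat.card (Etype n r) = n.factorial ^ r * r.factorial ^ (n - 1) := by
  rw [Nat.card_eq_fintype_card, Fintype.card_prod, Fintype.card_pi, Fintype.card_fun,
    Fintype.card_perm, Fintype.card_fin, Fintype.card_fin]
  congr 1
  have e1 : ∏ p : Pt n r, Fintype.card (Fin (n - p.1.val)) = ∏ p : Pt n r, (n - p.1.val) := by
    apply Finset.prod_congr rfl; intro p _; exact Fintype.card_fin _
  rw [e1, Fintype.prod_prod_type]
  have e2 : ∀ a : Fin n, ∏ _b : Fin r, (n - a.val) = (n - a.val) ^ r := by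
    intro a; rw [Finset.prod_const, Finset.card_univ, Fintype.card_fin]
  rw [Finset.prod_congr rfl (fun a _ => e2 a), Finset.prod_pow]
  congr 1
  rw [Fin.prod_univ_eq_prod_range (fun i => n - i) n, prod_range_sub]

end Statement4Aux

/-- The number of connected non-flat partitions of `[n] × [r]` is at most
`(n!)^r · (r!)^{n−1}`. -/
theorem statement4 (n r : ℕ) (hn : 1 ≤ n) (hr : 1 ≤ r) :
    Nat.card {ρ : Finpartition (Finset.univ : Finset (Fin n × Fin r)) //
        IsNonFlat ρ ∧ IsConn ρ}
      ≤ n.factorial ^ r * r.factorial ^ (n - 1) := by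
  have h := Nat.card_le_card_of_injective _ (Statement4Aux.enc_inj (n := n) (r := r) hr)
  rwa [Statement4Aux.card_Etype] at h
end

section
/- Every connected K₂-balanced finite simple graph with at least 3 vertices is strongly balanced. -/
/-- A finite simple graph `G` is *strongly balanced* if for every subgraph `H ⊆ G` with
`v(H) ≥ 2`, one has `e(H)/(v(H)−1) ≤ e(G)/(v(G)−1)` (in cross-multiplied form over `ℤ`). -/
def StronglyBalanced {V : Type*} [Fintype V] (G : SimpleGraph V) : Prop :=
  ∀ H : G.Subgraph, 2 ≤ Nat.card H.verts →
    (Nat.card H.edgeSet : ℤ) * ((Fintype.card V : ℤ) - 1)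
      ≤ (Nat.card G.edgeSet : ℤ) * ((Nat.card H.verts : ℤ) - 1)

/-- A finite simple graph `G` is *strictly balanced* if for every proper subgraph `H ⊊ G`
with `v(H) ≥ 1`, one has `e(H)/v(H) < e(G)/v(G)` (in cross-multiplied form). -/
def StrictlyBalanced {V : Type*} [Fintype V] (G : SimpleGraph V) : Prop :=
  ∀ H : G.Subgraph, H ≠ ⊤ → 1 ≤ Nat.card H.verts →
    (Nat.card H.edgeSet : ℤ) * (Fintype.card V : ℤ)
      < (Nat.card G.edgeSet : ℤ) * (Nat.card H.verts : ℤ)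

/-- A finite simple graph `G` is *K₂-balanced* if for every subgraph `H ⊆ G` with
`v(H) ≥ 3`, one has `(e(H)−1)/(v(H)−2) ≤ (e(G)−1)/(v(G)−2)` (in cross-multiplied form
over `ℤ`). -/
def K2Balanced {V : Type*} [Fintype V] (G : SimpleGraph V) : Prop :=
  ∀ H : G.Subgraph, 3 ≤ Nat.card H.verts →
    ((Nat.card H.edgeSet : ℤ) - 1) * ((Fintype.card V : ℤ) - 2)
      ≤ ((Nat.card G.edgeSet : ℤ) - 1) * ((Nat.card H.verts : ℤ) - 2)

/-- A finite simple graph `G` is *strictly K₂-balanced* if it is K₂-balanced and the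
inequality is strict for every proper subgraph `H ⊊ G` with `v(H) ≥ 3`. -/
def StrictlyK2Balanced {V : Type*} [Fintype V] (G : SimpleGraph V) : Prop :=
  K2Balanced G ∧
    ∀ H : G.Subgraph, H ≠ ⊤ → 3 ≤ Nat.card H.verts →
      ((Nat.card H.edgeSet : ℤ) - 1) * ((Fintype.card V : ℤ) - 2)
        < ((Nat.card G.edgeSet : ℤ) - 1) * ((Nat.card H.verts : ℤ) - 2)

open SimpleGraph

private lemma aux_grow {V : Type*} [Fintype V] (G : SimpleGraph V) (hconn : G.Connected) :
    ∀ (k : ℕ) (H : G.Subgraph), H.verts.Nonempty →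
      Fintype.card V ≤ Nat.card H.verts + k →
      Nat.card H.edgeSet + (Fintype.card V - Nat.card H.verts) ≤ Nat.card G.edgeSet := by
  intro k
  induction k with
  | zero =>
    intro H hne hcard
    have hle : Nat.card H.verts ≤ Fintype.card V := by
      rw [Nat.card_coe_set_eq]
      simpa [Set.ncard_univ, Nat.card_eq_fintype_card] using Set.ncard_le_ncard (Set.subset_univ H.verts) Set.finite_univ
    have h0 : Fintype.card V - Nat.card H.verts = 0 := by omega
    rw [h0]
    simpa [Nat.card_coe_set_eq] using
      Set.ncard_le_ncard H.edgeSet_subset (Set.toFinite _)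
  | succ k ih =>
    intro H hne hcard
    by_cases hfull : Fintype.card V ≤ Nat.card H.verts
    · have h0 : Fintype.card V - Nat.card H.verts = 0 := by omega
      rw [h0]
      simpa [Nat.card_coe_set_eq] using
        Set.ncard_le_ncard H.edgeSet_subset (Set.toFinite _)
    · -- find a vertex outside
      push_neg at hfull
      have hne' : H.verts ≠ Set.univ := by
        intro h
        rw [Nat.card_coe_set_eq, h, Set.ncard_univ, Nat.card_eq_fintype_card] at hfull
        omega
      obtain ⟨u, hu⟩ : ∃ u, u ∉ H.verts := by
        by_contra h
        push_neg at h
        exact hne' (Set.eq_univ_of_forall h)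
      obtain ⟨w, hw⟩ := hne
      obtain ⟨p⟩ := hconn.preconnected u w
      obtain ⟨d, -, hd1, hd2⟩ := p.exists_boundary_dart H.vertsᶜ hu (by simpa using hw)
      set a := d.toProd.1
      set b := d.toProd.2
      have ha : a ∉ H.verts := hd1
      have hb : b ∈ H.verts := by simpa using hd2
      have hab : G.Adj a b := d.adj
      set H' := H ⊔ G.subgraphOfAdj hab with hH'
      have hverts : H'.verts = insert a H.verts := by
        rw [hH', Subgraph.verts_sup, subgraphOfAdj_verts]
        ext x
        simp only [Set.mem_union, Set.mem_insert_iff, Set.mem_singleton_iff]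
        constructor
        · rintro (h | h | h) <;> simp_all
        · rintro (h | h) <;> simp_all
      have hvcard : Nat.card H'.verts = Nat.card H.verts + 1 := by
        rw [Nat.card_coe_set_eq, Nat.card_coe_set_eq, hverts,
          Set.ncard_insert_of_notMem ha (Set.toFinite _)]
      have hedge : H'.edgeSet = insert s(a, b) H.edgeSet := by
        rw [hH', Subgraph.edgeSet_sup, edgeSet_subgraphOfAdj]
        rw [Set.union_singleton]
      have hnotmem : s(a, b) ∉ H.edgeSet := by
        intro h
        exact ha (H.edge_vert (Subgraph.mem_edgeSet.mp h))
      have hecard : Nat.card H'.edgeSet = Nat.card H.edgeSet + 1 := by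
        rw [Nat.card_coe_set_eq, Nat.card_coe_set_eq, hedge,
          Set.ncard_insert_of_notMem hnotmem (Set.toFinite _)]
      have := ih H' ⟨b, by rw [hverts]; exact Set.mem_insert_of_mem _ hb⟩
        (by omega)
      rw [hvcard, hecard] at this
      omega

/-- Every connected K₂-balanced finite simple graph with at least 3 vertices is strongly
balanced. -/
theorem statement9 {V : Type*} [Fintype V] (G : SimpleGraph V)
    (hconn : G.Connected) (hV : 3 ≤ Fintype.card V) (hk2 : K2Balanced G) :
    StronglyBalanced G := by
  intro H h2
  have hvne : H.verts.Nonempty := by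
    have hpos : 0 < Nat.card H.verts := by omega
    exact Set.nonempty_coe_sort.mp (Nat.card_pos_iff.mp hpos).1
  have hvn : Nat.card H.verts ≤ Fintype.card V := by
    rw [Nat.card_coe_set_eq]
    simpa [Set.ncard_univ, Nat.card_eq_fintype_card] using
      Set.ncard_le_ncard (Set.subset_univ H.verts) Set.finite_univ
  have hgrow := aux_grow G hconn (Fintype.card V) H hvne (by omega)
  -- cast to ℤ
  have hgrowZ : (Nat.card H.edgeSet : ℤ) + (Fintype.card V : ℤ) - (Nat.card H.verts : ℤ)
      ≤ (Nat.card G.edgeSet : ℤ) := by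
    have : Nat.card H.edgeSet + Fintype.card V - Nat.card H.verts ≤ Nat.card G.edgeSet := by
      omega
    omega
  rcases eq_or_lt_of_le h2 with heq | hlt
  · -- v = 2: at most one edge
    have hcard2 : H.verts.ncard = 2 := by rw [← Nat.card_coe_set_eq]; omega
    obtain ⟨x, y, hxy, hset⟩ := Set.ncard_eq_two.mp hcard2
    have hsub : H.edgeSet ⊆ {s(x, y)} := by
      rintro e he
      induction e with
      | h a b =>
        have hadj : H.Adj a b := Subgraph.mem_edgeSet.mp he
        have ha : a ∈ H.verts := H.edge_vert hadj
        have hb : b ∈ H.verts := H.edge_vert hadj.symm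
        have hne : a ≠ b := hadj.ne
        rw [hset] at ha hb
        simp only [Set.mem_insert_iff, Set.mem_singleton_iff] at ha hb ⊢
        rcases ha with rfl | rfl <;> rcases hb with rfl | rfl <;>
          simp_all [Sym2.eq_swap]
    have hm1 : Nat.card H.edgeSet ≤ 1 := by
      rw [Nat.card_coe_set_eq]
      simpa using Set.ncard_le_ncard hsub (Set.toFinite _)
    have hv2 : (Nat.card H.verts : ℤ) = 2 := by exact_mod_cast heq.symm
    have hm1Z : (Nat.card H.edgeSet : ℤ) ≤ 1 := by exact_mod_cast hm1
    have hn3 : (3 : ℤ) ≤ (Fintype.card V : ℤ) := by exact_mod_cast hV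
    nlinarith [mul_nonneg (by linarith : (0:ℤ) ≤ 1 - (Nat.card H.edgeSet : ℤ))
      (by linarith : (0:ℤ) ≤ (Fintype.card V : ℤ) - 2)]
  · -- v ≥ 3
    have hK := hk2 H (by omega)
    have h3 : (3 : ℤ) ≤ (Nat.card H.verts : ℤ) := by exact_mod_cast hlt
    have hn3 : (3 : ℤ) ≤ (Fintype.card V : ℤ) := by exact_mod_cast hV
    have hvnZ : (Nat.card H.verts : ℤ) ≤ (Fintype.card V : ℤ) := by exact_mod_cast hvn
    nlinarith [hK, hgrowZ]
end

section
/- Let r ≥ 3 and m ≥ 0, and let G be a tree on vertex set [r+m] satisfying Assumption A. Then G satisfies the balance condition if and only if m = a_m(G). -/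
open Finset

/-- `a_m(G)`: the maximum, over `i ∈ [r]`, of the number of endpoints (vertices in
`{r+1, …, r+m}`) adjacent to `i` in `G`. -/
noncomputable def amax (r m : ℕ) (G : SimpleGraph (Fin (r + m))) : ℕ :=
  Finset.sup (Finset.univ : Finset (Fin r)) fun i =>
    Nat.card {j : Fin (r + m) // r ≤ j.val ∧ G.Adj (Fin.castAdd m i) j}

/-- Assumption A: the subgraph of `G` induced on `[r]` is connected, and the endpoint
vertices `r+1, …, r+m` are pairwise non-adjacent. -/
def AssumptionA (r m : ℕ) (G : SimpleGraph (Fin (r + m))) : Prop :=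
  (G.induce {v : Fin (r + m) | v.val < r}).Connected ∧
    ∀ u v : Fin (r + m), r ≤ u.val → r ≤ v.val → ¬ G.Adj u v

/-- The balance condition: for every subgraph `H ⊆ G` with `v(H) ≥ m + 2`,
`(e(H) − a_m(G)) / (v(H) − m − 1) ≤ (e(G) − a_m(G)) / (v(G) − m − 1)`
(in cross-multiplied form, over `ℤ`). -/
def BalCond (r m : ℕ) (G : SimpleGraph (Fin (r + m))) : Prop :=
  ∀ H : G.Subgraph, m + 2 ≤ Nat.card H.verts →
    ((Nat.card H.edgeSet : ℤ) - amax r m G) * (((r + m : ℕ) : ℤ) - m - 1)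
      ≤ ((Nat.card G.edgeSet : ℤ) - amax r m G) * ((Nat.card H.verts : ℤ) - m - 1)


open SimpleGraph Walk

lemma tree_subgraph_card_bound {V : Type*} [Fintype V] {G : SimpleGraph V}
    (hG : G.IsTree) (H : G.Subgraph) (hne : H.verts.Nonempty) :
    Nat.card H.edgeSet + 1 ≤ Nat.card H.verts := by
  classical
  obtain ⟨z⟩ := hG.isConnected.nonempty
  choose f hf hf' using (hG.existsUnique_path · z)
  set d : V → ℕ := fun v => (f v).length with hd
  have key : ∀ x y (h : G.Adj x y), d x ≤ d y → f y = Walk.cons h.symm (f x) := by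
    intro x y h hle
    have hy : y ∉ (f x).support := by
      intro hy
      have hdrop : (f x).dropUntil y hy = f y :=
        hf' y ((f x).dropUntil y hy) ((hf x).dropUntil hy)
      have hsplit := (f x).take_spec hy
      have hlen : ((f x).takeUntil y hy).length + ((f x).dropUntil y hy).length
          = (f x).length := by
        rw [← Walk.length_append, hsplit]
      have hpos : 0 < ((f x).takeUntil y hy).length := by
        rcases Nat.eq_zero_or_pos ((f x).takeUntil y hy).length with h0 | h0
        · exact absurd (Walk.eq_of_length_eq_zero h0) h.ne
        · exact h0
      rw [hdrop] at hlen
      simp only [hd] at hle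
      omega
    have : (Walk.cons h.symm (f x)).IsPath := (hf x).cons hy
    exact (hf' y _ this).symm
  have keylen : ∀ x y (h : G.Adj x y), d x ≤ d y → d y = d x + 1 := by
    intro x y h hle
    show (f y).length = (f x).length + 1
    rw [key x y h hle]
    simp
  have dne : ∀ x y, G.Adj x y → d x ≠ d y := by
    intro x y h heq
    have := keylen x y h heq.le
    omega
  have hVcard : 0 < Fintype.card V := Fintype.card_pos_iff.mpr ⟨z⟩
  set N := Fintype.card V with hN
  let q : V ≃ Fin N := Fintype.equivFin V
  set k : V → ℕ := fun v => N * d v + (q v : ℕ) with hk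
  have kinj : Function.Injective k := by
    intro a b hab
    simp only [hk] at hab
    have ha := (q a).isLt
    have hb := (q b).isLt
    have h1 : (N * d a + (q a : ℕ)) / N = d a := by
      rw [Nat.mul_add_div hVcard, Nat.div_eq_of_lt ha, Nat.add_zero]
    have h2 : (N * d b + (q b : ℕ)) / N = d b := by
      rw [Nat.mul_add_div hVcard, Nat.div_eq_of_lt hb, Nat.add_zero]
    have hdd : d a = d b := by rw [← h1, ← h2, hab]
    have : (q a : ℕ) = (q b : ℕ) := by
      rw [hdd] at hab
      omega
    exact q.injective (Fin.ext this)
  have kmono : ∀ a b, d a < d b → k a < k b := by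
    intro a b h
    have ha := (q a).isLt
    simp only [hk]
    calc N * d a + (q a : ℕ) < N * d a + N := by omega
      _ = N * (d a + 1) := by ring
      _ ≤ N * d b := Nat.mul_le_mul_left _ h
      _ ≤ N * d b + (q b : ℕ) := Nat.le_add_right _ _
  set ψ : Sym2 V → V := Sym2.lift ⟨fun x y => if k x ≤ k y then y else x, by
    intro x y
    rcases Nat.lt_trichotomy (k x) (k y) with h | h | h
    · simp [h.le, h.not_ge]
    · simp [kinj h]
    · simp [h.le, h.not_ge]⟩ with hψ
  have ψ_right : ∀ x y, d x < d y → ψ s(x, y) = y := by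
    intro x y h
    simp [hψ, (kmono _ _ h).le]
  have ψ_left : ∀ x y, d y < d x → ψ s(x, y) = x := by
    intro x y h
    simp [hψ, (kmono _ _ h).not_ge]
  have helper : ∀ e ∈ G.edgeSet, ∃ p,
      e = s(p, ψ e) ∧ d p < d (ψ e) ∧ (f (ψ e)).getVert 1 = p := by
    intro e he
    induction e with
    | _ x y =>
      rw [SimpleGraph.mem_edgeSet] at he
      rcases Nat.lt_trichotomy (d x) (d y) with h | h | h
      · have hy := ψ_right x y h
        refine ⟨x, by rw [hy], by rw [hy]; exact h, ?_⟩
        rw [hy, key x y he h.le]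
        simp
      · exact absurd h (dne x y he)
      · have hy := ψ_left x y h
        refine ⟨y, by rw [hy, Sym2.eq_swap], by rw [hy]; exact h, ?_⟩
        rw [hy, key y x he.symm h.le]
        simp
  obtain ⟨u0, hu0, hu0min⟩ := Set.exists_min_image H.verts d H.verts.toFinite hne
  have maps : ∀ e ∈ H.edgeSet, ψ e ∈ H.verts \ {u0} := by
    intro e he
    obtain ⟨p, hesplit, hdp, -⟩ := helper e (H.edgeSet_subset he)
    rw [hesplit] at he
    have hadj := SimpleGraph.Subgraph.mem_edgeSet.mp he
    refine ⟨hadj.snd_mem, ?_⟩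
    intro hcontra
    rw [Set.mem_singleton_iff] at hcontra
    rw [hcontra] at hdp
    exact absurd (hu0min p hadj.fst_mem) (by omega)
  have inj : Set.InjOn ψ H.edgeSet := by
    intro e1 he1 e2 he2 heq
    obtain ⟨p1, hs1, -, hg1⟩ := helper e1 (H.edgeSet_subset he1)
    obtain ⟨p2, hs2, -, hg2⟩ := helper e2 (H.edgeSet_subset he2)
    have hp : p1 = p2 := by rw [← hg1, ← hg2, heq]
    rw [hs1, hs2, hp, heq]
  have hle : H.edgeSet.ncard ≤ (H.verts \ {u0}).ncard :=
    Set.ncard_le_ncard_of_injOn ψ maps inj (H.verts \ {u0}).toFinite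
  rw [Set.ncard_diff_singleton_of_mem hu0] at hle
  have hvpos : 0 < H.verts.ncard := (Set.ncard_pos H.verts.toFinite).mpr hne
  rw [Nat.card_coe_set_eq, Nat.card_coe_set_eq]
  omega


lemma amax_le_m (r m : ℕ) (G : SimpleGraph (Fin (r + m))) : amax r m G ≤ m := by
  apply Finset.sup_le
  intro i _
  have h : Nat.card {j : Fin (r + m) // r ≤ j.val ∧ G.Adj (Fin.castAdd m i) j}
      ≤ Nat.card (Fin m) := by
    apply Nat.card_le_card_of_injective
      (fun j => (⟨j.1.val - r, by have := j.1.isLt; have := j.2.1; omega⟩ : Fin m))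
    intro a b hab
    have h1 : a.1.val - r = b.1.val - r := congrArg Fin.val hab
    have := a.2.1; have := b.2.1
    exact Subtype.ext (Fin.ext (by omega))
  simpa using h

/-- For `r ≥ 3`, `m ≥ 0`, a tree `G` on `[r+m]` satisfying Assumption A satisfies the
balance condition if and only if `m = a_m(G)`. -/
theorem statement13 (r m : ℕ) (hr : 3 ≤ r)
    (G : SimpleGraph (Fin (r + m))) (htree : G.IsTree) (hA : AssumptionA r m G) :
    BalCond r m G ↔ m = amax r m G := by
  classical
  -- edge count of G
  have hE : G.edgeSet.ncard = r + m - 1 := by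
    have h1 := htree.card_edgeFinset
    rw [Fintype.card_fin] at h1
    have h2 : G.edgeSet.ncard = G.edgeFinset.card := by
      rw [Set.ncard_eq_toFinset_card']
      congr 1
    omega
  have hEN : Nat.card G.edgeSet = r + m - 1 := by
    rw [Nat.card_coe_set_eq, hE]
  constructor
  · -- balance → m = amax
    intro hbal
    by_contra hne
    have ham : amax r m G < m := lt_of_le_of_ne (amax_le_m r m G) (Ne.symm hne)
    have hm1 : 1 ≤ m := by omega
    -- every vertex has positive degree
    have hdegpos : ∀ v : Fin (r + m), 0 < G.degree v := by
      intro v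
      rw [SimpleGraph.degree_pos_iff_exists_adj]
      obtain ⟨w, hw⟩ := Fintype.exists_ne_of_one_lt_card
        (by rw [Fintype.card_fin]; omega) v
      obtain ⟨p⟩ := htree.isConnected.preconnected v w
      have hlen : 0 < p.length := by
        rcases Nat.eq_zero_or_pos p.length with h0 | h0
        · exact absurd (SimpleGraph.Walk.eq_of_length_eq_zero h0) (Ne.symm hw)
        · exact h0
      exact ⟨_, by simpa using p.adj_getVert_succ hlen⟩
    -- there is a leaf
    obtain ⟨v0, hv0⟩ : ∃ v : Fin (r + m), G.degree v = 1 := by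
      by_contra hno
      push_neg at hno
      have h2 : ∀ v : Fin (r + m), 2 ≤ G.degree v := by
        intro v; have := hdegpos v; have := hno v; omega
      have hsum : (Finset.univ : Finset (Fin (r + m))).card • 2
          ≤ ∑ v, G.degree v := Finset.card_nsmul_le_sum _ _ _ (fun v _ => h2 v)
      rw [SimpleGraph.sum_degrees_eq_twice_card_edges] at hsum
      have h2' : G.edgeSet.ncard = G.edgeFinset.card := by
        rw [Set.ncard_eq_toFinset_card']
        congr 1
      simp only [Finset.card_univ, Fintype.card_fin, smul_eq_mul] at hsum
      omega
    -- the subgraph deleting the leaf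
    set Hd : G.Subgraph :=
      { verts := {v0}ᶜ
        Adj := fun a b => G.Adj a b ∧ a ≠ v0 ∧ b ≠ v0
        adj_sub := fun h => h.1
        edge_vert := fun h => h.2.1
        symm := ⟨fun a b h => ⟨h.1.symm, h.2.2, h.2.1⟩⟩ } with hHd
    have hverts : Nat.card Hd.verts = r + m - 1 := by
      show Nat.card ↥({v0}ᶜ : Set (Fin (r + m))) = r + m - 1
      rw [Nat.card_coe_set_eq, Set.compl_eq_univ_diff,
        Set.ncard_diff_singleton_of_mem (Set.mem_univ v0),
        Set.ncard_univ, Nat.card_eq_fintype_card, Fintype.card_fin]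
    have hedge : Hd.edgeSet = G.edgeSet \ G.incidenceSet v0 := by
      ext e
      induction e with
      | _ a b =>
        simp only [SimpleGraph.Subgraph.mem_edgeSet, Set.mem_diff,
          SimpleGraph.mem_edgeSet, SimpleGraph.incidenceSet, Set.mem_setOf_eq,
          Sym2.mem_iff, hHd]
        constructor
        · rintro ⟨hadj, ha, hb⟩
          refine ⟨hadj, ?_⟩
          rintro ⟨-, h | h⟩
          · exact ha h.symm
          · exact hb h.symm
        · rintro ⟨hadj, hnot⟩
          refine ⟨hadj, ?_, ?_⟩
          · intro h; exact hnot ⟨hadj, Or.inl h.symm⟩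
          · intro h; exact hnot ⟨hadj, Or.inr h.symm⟩
    have hecard : Nat.card Hd.edgeSet = r + m - 2 := by
      rw [Nat.card_coe_set_eq, hedge,
        Set.ncard_diff (G.incidenceSet_subset v0) (G.incidenceSet v0).toFinite]
      have hinc : (G.incidenceSet v0).ncard = 1 := by
        rw [← Nat.card_coe_set_eq, Nat.card_eq_fintype_card,
          SimpleGraph.card_incidenceSet_eq_degree, hv0]
      rw [hE, hinc]
      omega
    have hkey := hbal Hd (by rw [hverts]; omega)
    rw [hverts, hecard, hEN] at hkey
    have hc1 : ((r + m - 2 : ℕ) : ℤ) = (r : ℤ) + m - 2 := by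
      have : (2:ℕ) ≤ r + m := by omega
      push_cast [Nat.cast_sub this]; ring
    have hc2 : ((r + m - 1 : ℕ) : ℤ) = (r : ℤ) + m - 1 := by
      have : (1:ℕ) ≤ r + m := by omega
      push_cast [Nat.cast_sub this]; ring
    rw [hc1, hc2] at hkey
    push_cast at hkey
    have har : (amax r m G : ℤ) ≤ (m : ℤ) - 1 := by exact_mod_cast by omega
    have hr' : (3 : ℤ) ≤ r := by exact_mod_cast hr
    nlinarith [hkey, har, hr']
  · -- m = amax → balance
    intro hm H hcard
    have hne : H.verts.Nonempty := by
      rcases Set.eq_empty_or_nonempty H.verts with h | h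
      · rw [h] at hcard; simp at hcard
      · exact h
    have hfb := tree_subgraph_card_bound htree H hne
    rw [← hm, hEN]
    have hc2 : ((r + m - 1 : ℕ) : ℤ) = (r : ℤ) + m - 1 := by
      have : (1:ℕ) ≤ r + m := by omega
      push_cast [Nat.cast_sub this]; ring
    rw [hc2]
    push_cast
    have hfb' : (Nat.card H.edgeSet : ℤ) + 1 ≤ (Nat.card H.verts : ℤ) := by
      exact_mod_cast hfb
    have hr' : (3 : ℤ) ≤ r := by exact_mod_cast hr
    nlinarith [mul_nonneg (by linarith : (0:ℤ) ≤ (r:ℤ) - 1)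
      (by linarith : (0:ℤ) ≤ (Nat.card H.verts : ℤ) - 1 - (Nat.card H.edgeSet : ℤ))]
end

section
/- Let r ≥ 2 and let G be a connected simple graph on vertex set [r] (no endpoints, m = 0), with automorphism group Aut(G). Then for every n ≥ 1, the number of connected non-flat partitions ρ of [n]×[r] with exactly r blocks and with e(ρ_G) = e(G) equals |Aut(G)|^{n−1}. -/
open Finset

/-- The graph `ρ_G` (no endpoints, `m = 0`) associated to a partition `ρ` of `[n] × [r]`
and a graph `G` on `[r]`: vertices are the blocks of `ρ`, and two distinct blocks are
adjacent iff they contain entries `(i,j₁)`, `(i,j₂)` in a common row `i` with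
`{j₁,j₂} ∈ E_G`. -/
def rhoGraph0 (n r : ℕ) (G : SimpleGraph (Fin r))
    (ρ : Finpartition (Finset.univ : Finset (Fin n × Fin r))) :
    SimpleGraph {b // b ∈ ρ.parts} :=
  SimpleGraph.fromRel fun b b' =>
    ∃ i : Fin n, ∃ j₁ j₂ : Fin r, (i, j₁) ∈ b.1 ∧ (i, j₂) ∈ b'.1 ∧ G.Adj j₁ j₂

namespace S14


variable {n r : ℕ}

def rowSetoid (g : Fin n → Equiv.Perm (Fin r)) : Setoid (Fin n × Fin r) where
  r p q := (g p.1).symm p.2 = (g q.1).symm q.2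
  iseqv := ⟨fun _ => rfl, Eq.symm, Eq.trans⟩

instance (g : Fin n → Equiv.Perm (Fin r)) : DecidableRel (rowSetoid g).r :=
  fun _ _ => instDecidableEqFin _ _ _

/-- The non-flat partition attached to a tuple of permutations. -/
def mkP (g : Fin n → Equiv.Perm (Fin r)) : Finpartition (univ : Finset (Fin n × Fin r)) :=
  Finpartition.ofSetoid (rowSetoid g)

lemma mem_part_mkP {g : Fin n → Equiv.Perm (Fin r)} {p q : Fin n × Fin r} :
    q ∈ (mkP g).part p ↔ (g p.1).symm p.2 = (g q.1).symm q.2 :=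
  Finpartition.mem_part_ofSetoid_iff_rel

def block (g : Fin n → Equiv.Perm (Fin r)) (c : Fin r) : Finset (Fin n × Fin r) :=
  univ.image fun i => (i, g i c)

lemma mem_block {g : Fin n → Equiv.Perm (Fin r)} {c : Fin r} {p : Fin n × Fin r} :
    p ∈ block g c ↔ p.2 = g p.1 c := by
  constructor
  · rintro hp
    simp only [block, mem_image, mem_univ, true_and] at hp
    obtain ⟨i, hi⟩ := hp
    cases hi; rfl
  · intro h
    simp only [block, mem_image, mem_univ, true_and]
    exact ⟨p.1, by rw [← h]⟩

lemma part_eq_block (g : Fin n → Equiv.Perm (Fin r)) (p : Fin n × Fin r) :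
    (mkP g).part p = block g ((g p.1).symm p.2) := by
  ext q
  rw [mem_part_mkP, mem_block]
  constructor
  · intro h; rw [h]; exact (Equiv.apply_symm_apply _ _).symm
  · intro h; rw [h, Equiv.symm_apply_apply]

lemma block_mem_parts (g : Fin n → Equiv.Perm (Fin r)) (i0 : Fin n) (c : Fin r) :
    block g c ∈ (mkP g).parts := by
  have h := part_eq_block g (i0, g i0 c)
  simp only [Equiv.symm_apply_apply] at h
  rw [← h]
  exact (mkP g).part_mem.mpr (mem_univ _)

lemma parts_mkP (g : Fin n → Equiv.Perm (Fin r)) (i0 : Fin n) :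
    (mkP g).parts = univ.image (block g) := by
  ext b
  simp only [mem_image, mem_univ, true_and]
  constructor
  · intro hb
    obtain ⟨p, hp⟩ := (mkP g).nonempty_of_mem_parts hb
    have := (mkP g).part_eq_of_mem hb hp
    exact ⟨(g p.1).symm p.2, by rw [← part_eq_block, this]⟩
  · rintro ⟨c, rfl⟩
    exact block_mem_parts g i0 c

lemma block_injective (g : Fin n → Equiv.Perm (Fin r)) (i0 : Fin n) :
    Function.Injective (block g) := by
  intro c c' h
  have : (i0, g i0 c) ∈ block g c' := by rw [← h]; exact mem_block.mpr rfl
  have h2 : (g i0) c = (g i0) c' := mem_block.mp this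
  exact (g i0).injective h2

lemma card_parts_mkP (g : Fin n → Equiv.Perm (Fin r)) (i0 : Fin n) :
    (mkP g).parts.card = r := by
  rw [parts_mkP g i0, card_image_of_injective _ (block_injective g i0), card_univ,
    Fintype.card_fin]

lemma card_block (g : Fin n → Equiv.Perm (Fin r)) (c : Fin r) :
    (block g c).card = n := by
  rw [block, card_image_of_injective, card_univ, Fintype.card_fin]
  intro i i' h
  exact (Prod.mk.injEq _ _ _ _ ▸ h).1

section Part2

variable {n r : ℕ}

lemma nonFlat_mkP (g : Fin n → Equiv.Perm (Fin r)) : IsNonFlat (mkP g) := by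
  intro b hb p hp q hq hpq
  have hbp : b = (mkP g).part p := ((mkP g).part_eq_of_mem hb hp).symm
  have hrel : (g p.1).symm p.2 = (g q.1).symm q.2 := mem_part_mkP.mp (hbp ▸ hq)
  rw [hpq] at hrel
  have : p.2 = q.2 := (g q.1).symm.injective hrel
  exact Prod.ext hpq this

lemma conn_mkP (g : Fin n → Equiv.Perm (Fin r)) (p q : Fin n × Fin r) :
    Relation.EqvGen (fun a b => a.1 = b.1 ∨ ∃ t ∈ (mkP g).parts, a ∈ t ∧ b ∈ t) p q := by
  set m : Fin n × Fin r := (q.1, g q.1 ((g p.1).symm p.2)) with hm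
  have h1 : m ∈ (mkP g).part p := by
    rw [mem_part_mkP]
    simp [hm]
  refine Relation.EqvGen.trans _ m _ (Relation.EqvGen.rel _ _ (Or.inr ?_))
    (Relation.EqvGen.rel _ _ (Or.inl rfl))
  exact ⟨(mkP g).part p, (mkP g).part_mem.mpr (mem_univ p), (mkP g).mem_part (mem_univ p), h1⟩

def aux (g : Fin n → Equiv.Perm (Fin r)) (G : SimpleGraph (Fin r)) : SimpleGraph (Fin r) where
  Adj c c' := c ≠ c' ∧ ∃ i, G.Adj (g i c) (g i c')
  symm := ⟨by
    rintro c c' ⟨h, i, hi⟩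
    exact ⟨h.symm, i, hi.symm⟩⟩
  loopless := ⟨fun c h => h.1 rfl⟩

noncomputable def φfun (g : Fin n → Equiv.Perm (Fin r)) (i0 : Fin n) :
    Fin r ≃ {b // b ∈ (mkP g).parts} :=
  Equiv.ofBijective (fun c => ⟨block g c, block_mem_parts g i0 c⟩)
    ⟨fun c c' h => block_injective g i0 (congrArg Subtype.val h),
     by
      rintro ⟨b, hb⟩
      rw [parts_mkP g i0] at hb
      simp only [mem_image, mem_univ, true_and] at hb
      obtain ⟨c, rfl⟩ := hb
      exact ⟨c, rfl⟩⟩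

noncomputable def isoAux (g : Fin n → Equiv.Perm (Fin r)) (i0 : Fin n)
    (G : SimpleGraph (Fin r)) :
    aux g G ≃g rhoGraph0 n r G (mkP g) where
  toEquiv := φfun g i0
  map_rel_iff' := by
    intro c c'
    show (rhoGraph0 n r G (mkP g)).Adj ⟨block g c, _⟩ ⟨block g c', _⟩ ↔ (aux g G).Adj c c'
    rw [rhoGraph0, SimpleGraph.fromRel_adj]
    constructor
    · rintro ⟨hne, h | h⟩ <;>
      · obtain ⟨i, j₁, j₂, hj₁, hj₂, hadj⟩ := h
        have e1 := mem_block.mp hj₁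
        have e2 := mem_block.mp hj₂
        dsimp at e1 e2
        subst e1; subst e2
        refine ⟨fun hcc => hne (by rw [hcc]), i, ?_⟩
        first
        | exact hadj
        | exact hadj.symm
    · rintro ⟨hne, i, hadj⟩
      refine ⟨fun h => hne (block_injective g i0 (congrArg Subtype.val h)), Or.inl ?_⟩
      exact ⟨i, g i c, g i c', mem_block.mpr rfl, mem_block.mpr rfl, hadj⟩

end Part2

section Part3

variable {n r : ℕ} (g : Fin n → Equiv.Perm (Fin r)) (G : SimpleGraph (Fin r))

lemma aux_eq_of_aut (i0 : Fin n)
    (Haut : ∀ i a b, G.Adj (g i a) (g i b) ↔ G.Adj a b) : aux g G = G := by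
  ext c c'
  constructor
  · rintro ⟨_, i, hi⟩
    exact (Haut i c c').mp hi
  · intro h
    exact ⟨h.ne, i0, (Haut i0 c c').mpr h⟩

lemma card_edge_mkP_of_aut (i0 : Fin n)
    (Haut : ∀ i a b, G.Adj (g i a) (g i b) ↔ G.Adj a b) :
    Nat.card (rhoGraph0 n r G (mkP g)).edgeSet = Nat.card G.edgeSet := by
  have h := aux_eq_of_aut g G i0 Haut
  have e := (isoAux g i0 G).mapEdgeSet
  rw [h] at e
  exact (Nat.card_congr e).symm

lemma aut_of_card_edge (i0 : Fin n) (hg0 : g i0 = 1)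
    (hcard : Nat.card (rhoGraph0 n r G (mkP g)).edgeSet = Nat.card G.edgeSet) :
    ∀ i a b, G.Adj a b ↔ G.Adj (g i a) (g i b) := by
  have hA : Nat.card (aux g G).edgeSet = Nat.card G.edgeSet := by
    rw [← hcard]
    exact Nat.card_congr (isoAux g i0 G).mapEdgeSet
  have hle : G ≤ aux g G := by
    intro a b h
    refine ⟨h.ne, i0, ?_⟩
    rw [hg0]
    simpa using h
  have heq : G.edgeSet = (aux g G).edgeSet := by
    refine Set.eq_of_subset_of_ncard_le (SimpleGraph.edgeSet_mono hle) ?_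
      (aux g G).edgeSet.toFinite
    rw [← Nat.card_coe_set_eq, ← Nat.card_coe_set_eq, hA]
  have hauxG : aux g G = G := SimpleGraph.edgeSet_inj.mp heq.symm
  have hback : ∀ i a b, G.Adj (g i a) (g i b) → G.Adj a b := by
    intro i a b h
    have hab : a ≠ b := fun hab => h.ne (by rw [hab])
    have : (aux g G).Adj a b := ⟨hab, i, h⟩
    rwa [hauxG] at this
  intro i a b
  refine ⟨fun h => ?_, hback i a b⟩
  have hmaps : ∀ e ∈ G.edgeSet, Sym2.map (g i).symm e ∈ G.edgeSet := by
    intro e he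
    induction e with
    | _ x y =>
      rw [Sym2.map_pair_eq, SimpleGraph.mem_edgeSet] at *
      exact hback i _ _ (by simpa [Equiv.apply_symm_apply] using he)
  let u : G.edgeSet → G.edgeSet := fun e => ⟨Sym2.map (g i).symm e.1, hmaps e.1 e.2⟩
  have hinj : Function.Injective u := by
    intro e e' hee
    have := congrArg Subtype.val hee
    simp only [u] at this
    exact Subtype.ext (Sym2.map.injective (g i).symm.injective this)
  obtain ⟨e, he⟩ := (Finite.injective_iff_surjective.mp hinj) ⟨s(a, b), h⟩
  have he1 : Sym2.map (g i).symm e.1 = s(a, b) := congrArg Subtype.val he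
  have he2 : e.1 = s(g i a, g i b) := by
    have := congrArg (Sym2.map (g i)) he1
    rwa [Sym2.map_map, show ((g i : Fin r → Fin r) ∘ (g i).symm) = id from
      funext fun x => Equiv.apply_symm_apply _ _, Sym2.map_id, id_eq, Sym2.map_pair_eq] at this
  have := e.2
  rw [he2, SimpleGraph.mem_edgeSet] at this
  exact this

end Part3

section Part4

variable {n r : ℕ}

lemma exists_g (ρ : Finpartition (Finset.univ : Finset (Fin n × Fin r))) (hn : 0 < n)
    (hNF : IsNonFlat ρ) (hcard : ρ.parts.card = r) :
    ∃ g : Fin n → Equiv.Perm (Fin r), g ⟨0, hn⟩ = 1 ∧ ρ = mkP g := by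
  set i0 : Fin n := ⟨0, hn⟩ with hi0
  -- every part has card ≤ n
  have hle : ∀ b ∈ ρ.parts, b.card ≤ n := by
    intro b hb
    have himg : (b.image Prod.fst).card = b.card :=
      card_image_of_injOn (fun p hp q hq h => hNF b hb p hp q hq h)
    calc b.card = (b.image Prod.fst).card := himg.symm
      _ ≤ (univ : Finset (Fin n)).card := card_le_card (subset_univ _)
      _ = n := by rw [card_univ, Fintype.card_fin]
  have hsum : ∑ b ∈ ρ.parts, b.card = n * r := by
    rw [ρ.sum_card_parts, card_univ, Fintype.card_prod, Fintype.card_fin, Fintype.card_fin]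
  -- every part has card exactly n
  have hbn : ∀ b ∈ ρ.parts, b.card = n := by
    by_contra hcon
    push_neg at hcon
    obtain ⟨b, hb, hbne⟩ := hcon
    have : ∑ b ∈ ρ.parts, b.card < ∑ _b ∈ ρ.parts, n :=
      Finset.sum_lt_sum hle ⟨b, hb, lt_of_le_of_ne (hle b hb) hbne⟩
    rw [hsum, Finset.sum_const, hcard, smul_eq_mul, Nat.mul_comm] at this
    omega
  -- unique element per row in each part
  have hEU : ∀ b ∈ ρ.parts, ∀ i : Fin n, ∃! j : Fin r, (i, j) ∈ b := by
    intro b hb i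
    have himg : (b.image Prod.fst).card = b.card :=
      card_image_of_injOn (fun p hp q hq h => hNF b hb p hp q hq h)
    have : b.image Prod.fst = univ := by
      apply Finset.eq_of_subset_of_card_le (subset_univ _)
      rw [himg, hbn b hb, card_univ, Fintype.card_fin]
    have hi : i ∈ b.image Prod.fst := this ▸ mem_univ i
    obtain ⟨p, hp, hp1⟩ := mem_image.mp hi
    refine ⟨p.2, ?_, ?_⟩
    · show (i, p.2) ∈ b
      rw [← hp1]
      exact Prod.mk.eta ▸ hp
    intro j hj
    have := hNF b hb (i, j) hj p hp (by rw [hp1])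
    rw [← this]
  have hEU' : ∀ (i : Fin n) (c : Fin r), ∃! j : Fin r, (i, j) ∈ ρ.part (i0, c) :=
    fun i c => hEU _ (ρ.part_mem.mpr (mem_univ _)) i
  choose g0 hg0 hg0u using hEU'
  have hinj : ∀ i : Fin n, Function.Injective (g0 i) := by
    intro i c c' h
    have h1 : (i, g0 i c) ∈ ρ.part (i0, c) := hg0 i c
    have h2 : (i, g0 i c) ∈ ρ.part (i0, c') := h ▸ hg0 i c'
    have hpp : ρ.part (i0, c) = ρ.part (i0, c') :=
      ρ.eq_of_mem_parts (ρ.part_mem.mpr (mem_univ _)) (ρ.part_mem.mpr (mem_univ _)) h1 h2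
    have hc' : (i0, c') ∈ ρ.part (i0, c) := hpp ▸ ρ.mem_part (mem_univ _)
    have := hNF _ (ρ.part_mem.mpr (mem_univ (i0, c))) (i0, c) (ρ.mem_part (mem_univ _))
      (i0, c') hc' rfl
    exact (Prod.mk.injEq _ _ _ _ ▸ this).2
  set g : Fin n → Equiv.Perm (Fin r) :=
    fun i => Equiv.ofBijective (g0 i) (Finite.injective_iff_bijective.mp (hinj i)) with hg
  have hgapp : ∀ i c, g i c = g0 i c := fun i c => rfl
  have hg0eq : g i0 = 1 :=
    Equiv.ext fun c => (hg0u i0 c c (ρ.mem_part (mem_univ _))).symm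
  refine ⟨g, hg0eq, ?_⟩
  -- parts agree
  have claim1 : ∀ c : Fin r, ρ.part (i0, c) = block g c := by
    intro c
    have hsub : block g c ⊆ ρ.part (i0, c) := by
      intro p hp
      have := mem_block.mp hp
      have hp2 : p = (p.1, g0 p.1 c) := Prod.ext rfl this
      rw [hp2]
      exact hg0 p.1 c
    exact (Finset.eq_of_subset_of_card_le hsub
      (by rw [card_block, hbn _ (ρ.part_mem.mpr (mem_univ _))])).symm
  apply Finpartition.ext
  rw [parts_mkP g i0]
  ext b
  simp only [mem_image, mem_univ, true_and]
  constructor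
  · intro hb
    obtain ⟨j, hj, -⟩ := hEU b hb i0
    exact ⟨j, by rw [← claim1, ρ.part_eq_of_mem hb hj]⟩
  · rintro ⟨c, rfl⟩
    rw [← claim1]
    exact ρ.part_mem.mpr (mem_univ _)

end Part4

section Part5

variable {n r : ℕ} {G : SimpleGraph (Fin r)}

def gof (G : SimpleGraph (Fin r)) (i0 : Fin n) (f : {i : Fin n // i ≠ i0} → (G ≃g G)) :
    Fin n → Equiv.Perm (Fin r) :=
  fun i => if h : i = i0 then 1 else (f ⟨i, h⟩).toEquiv

lemma gof_i0 (i0 : Fin n) (f : {i : Fin n // i ≠ i0} → (G ≃g G)) : gof G i0 f i0 = 1 :=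
  dif_pos rfl

lemma gof_ne (i0 : Fin n) (f : {i : Fin n // i ≠ i0} → (G ≃g G)) (i : Fin n) (h : i ≠ i0) :
    gof G i0 f i = (f ⟨i, h⟩).toEquiv :=
  dif_neg h

lemma gof_aut (i0 : Fin n) (f : {i : Fin n // i ≠ i0} → (G ≃g G)) :
    ∀ i a b, G.Adj (gof G i0 f i a) (gof G i0 f i b) ↔ G.Adj a b := by
  intro i a b
  by_cases h : i = i0
  · subst h
    rw [gof_i0]
    simp
  · rw [gof_ne i0 f i h]
    exact (f ⟨i, h⟩).map_rel_iff

end Part5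

end S14

open S14

/-- For a connected simple graph `G` on `[r]` (`r ≥ 2`, no endpoints) and every `n ≥ 1`,
the number of connected non-flat partitions `ρ` of `[n] × [r]` with exactly `r` blocks and
with `e(ρ_G) = e(G)` equals `|Aut(G)|^{n−1}`. -/
theorem statement14 (n r : ℕ) (hn : 1 ≤ n) (hr : 2 ≤ r)
    (G : SimpleGraph (Fin r)) (hconn : G.Connected) :
    Nat.card {ρ : Finpartition (Finset.univ : Finset (Fin n × Fin r)) //
        IsNonFlat ρ ∧ IsConn ρ ∧ ρ.parts.card = r ∧
        Nat.card (rhoGraph0 n r G ρ).edgeSet = Nat.card G.edgeSet}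
      = Nat.card (G ≃g G) ^ (n - 1) := by
  classical
  have hn0 : 0 < n := hn
  set i0 : Fin n := ⟨0, hn0⟩ with hi0
  let Ψ : ({i : Fin n // i ≠ i0} → (G ≃g G)) →
      {ρ : Finpartition (Finset.univ : Finset (Fin n × Fin r)) //
        IsNonFlat ρ ∧ IsConn ρ ∧ ρ.parts.card = r ∧
        Nat.card (rhoGraph0 n r G ρ).edgeSet = Nat.card G.edgeSet} :=
    fun f => ⟨mkP (gof G i0 f), nonFlat_mkP _, fun p q => conn_mkP _ p q,
      card_parts_mkP _ i0, card_edge_mkP_of_aut _ G i0 (gof_aut i0 f)⟩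
  have hinj : Function.Injective Ψ := by
    intro f f' h
    have hP : mkP (gof G i0 f) = mkP (gof G i0 f') := congrArg Subtype.val h
    funext x
    apply RelIso.ext
    intro c
    have h1 : (x.1, gof G i0 f x.1 c) ∈ (mkP (gof G i0 f)).part (i0, c) := by
      rw [mem_part_mkP]
      simp [gof_i0]
      rfl
    have h2 : (x.1, gof G i0 f' x.1 c) ∈ (mkP (gof G i0 f')).part (i0, c) := by
      rw [mem_part_mkP]
      simp [gof_i0]
      rfl
    rw [hP] at h1
    have heq := nonFlat_mkP (gof G i0 f') _
      ((mkP (gof G i0 f')).part_mem.mpr (mem_univ (i0, c))) _ h1 _ h2 rfl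
    have hsnd : gof G i0 f x.1 c = gof G i0 f' x.1 c := congrArg Prod.snd heq
    rw [gof_ne i0 f x.1 x.2, gof_ne i0 f' x.1 x.2] at hsnd
    exact hsnd
  have hsurj : Function.Surjective Ψ := by
    rintro ⟨ρ, hNF, hConn, hcard, hedge⟩
    obtain ⟨g, hg0, hρ⟩ := exists_g ρ hn0 hNF hcard
    subst hρ
    have Haut' := aut_of_card_edge g G i0 hg0 hedge
    refine ⟨fun x => ⟨g x.1, fun {a b} => (Haut' x.1 a b).symm⟩, ?_⟩
    apply Subtype.ext
    show mkP (gof G i0 _) = mkP g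
    congr 1
    funext i
    by_cases h : i = i0
    · subst h
      rw [gof_i0, hg0]
    · exact gof_ne i0 _ i h
  rw [← Nat.card_congr (Equiv.ofBijective Ψ ⟨hinj, hsurj⟩), Nat.card_fun]
  congr 1
  rw [Nat.card_eq_fintype_card, Fintype.card_subtype_compl, Fintype.card_fin,
    Fintype.card_subtype_eq]
end

section
/- Let d ≥ 1, k ≥ 1, and let T be a tree with vertex set {0, 1, …, k}. Let h : ℝ^d → [0,∞) be measurable with h(−x) = h(x) for all x and ∫_{ℝ^d} h(x) dx < ∞. Then for every fixed x_0 ∈ ℝ^d, ∫_{(ℝ^d)^k} ∏_{{i,j} ∈ E(T)} h(x_i − x_j) dx_1 ⋯ dx_k = (∫_{ℝ^d} h(x) dx)^k, where the integral is with respect to Lebesgue measure on (ℝ^d)^k. -/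
/-
Integrate out the coordinates one leaf at a time. If `ℓ` is a leaf of the tree, different from the
root, with neighbour `m`, then `x ℓ` occurs in a single factor `g (x ℓ - x m)`; by translation
invariance of the measure it integrates to `∫ g`, and what remains is the weight of the tree with
`ℓ` removed. Phrasing the partial integrations as `lmarginal`s lets the induction run over trees
on arbitrary finite vertex types, so the vertices never need to be relabelled.
-/

open MeasureTheory Finset
open scoped ENNReal

namespace SimpleGraph
variable {V : Type*} {T : SimpleGraph V}

theorem IsTree.induce_compl_singleton_of_degree_eq_one (hT : T.IsTree) {v : V}
    [Fintype (T.neighborSet v)] (hv : T.degree v = 1) : (T.induce {v}ᶜ).IsTree :=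
  ⟨hT.connected.induce_compl_singleton_of_degree_eq_one hv, hT.isAcyclic.induce _⟩

theorem IsTree.exists_ne_degree_eq_one [Fintype V] [Nontrivial V] [DecidableRel T.Adj]
    (hT : T.IsTree) (r : V) : ∃ v ≠ r, T.degree v = 1 := by
  obtain ⟨u, v, huv, hu, hv⟩ := hT.exists_ne_and_degree_eq_one
  by_cases hur : u = r
  · exact ⟨v, hur ▸ huv.symm, by convert hv⟩
  · exact ⟨u, hur, by convert hu⟩

theorem edgeFinset_erase_eq_inter_sym2 [Fintype V] [DecidableEq V] [DecidableRel T.Adj]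
    {ℓ m : V} (hm : ∀ w, T.Adj ℓ w ↔ w = m) :
    T.edgeFinset.erase s(ℓ, m) = T.edgeFinset ∩ ({ℓ}ᶜ : Set V).toFinset.sym2 := by
  ext e
  induction e using Sym2.ind with
  | _ a b =>
    simp only [mem_erase, mem_edgeFinset, mem_edgeSet, mem_inter, mem_sym2_iff, Sym2.mem_iff,
      Set.mem_toFinset, Set.mem_compl_singleton_iff]
    have := hm a; have := hm b; have := T.adj_symm (u := a) (v := b)
    grind [Sym2.eq_iff, T.loopless]

end SimpleGraph

theorem MeasureTheory.lmarginal_const_mul {δ : Type*} {X : δ → Type*}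
    [∀ i, MeasurableSpace (X i)] (μ : ∀ i, Measure (X i)) [DecidableEq δ] (s : Finset δ)
    {f : (∀ i, X i) → ℝ≥0∞} (hf : Measurable f) (c : ℝ≥0∞) :
    (∫⋯∫⁻_s, fun x => c * f x ∂μ) = fun x => c * (∫⋯∫⁻_s, f ∂μ) x := by
  ext x
  exact lintegral_const_mul c (hf.comp measurable_updateFinset)

theorem measurable_fin_cons {n : ℕ} {X : Fin (n + 1) → Type*} [∀ i, MeasurableSpace (X i)]
    (x₀ : X 0) :
    Measurable fun y : ∀ i : Fin n, X i.succ => (Fin.cons x₀ y : ∀ i, X i) :=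
  measurable_pi_lambda _ fun i => Fin.cases measurable_const (fun j => measurable_pi_apply j) i

theorem lintegral_cons_eq_lmarginal {n : ℕ} {X : Fin (n + 1) → Type*}
    [∀ i, MeasurableSpace (X i)] (μ : ∀ i, Measure (X i)) [∀ i, SigmaFinite (μ i)]
    {f : (∀ i, X i) → ℝ≥0∞} (hf : Measurable f) (x : ∀ i, X i) :
    ∫⁻ y, f (Fin.cons (x 0) y) ∂Measure.pi (fun i => μ i.succ)
      = (∫⋯∫⁻_(univ.erase 0), f ∂μ) x := by
  have hsucc := lmarginal_image (μ := μ) (Fin.succ_injective _) univ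
    (f := fun y => f (Fin.cons (x 0) y)) (hf.comp (measurable_fin_cons _)) x
  rw [lmarginal_univ, Fin.image_succ_univ] at hsucc
  refine hsucc.symm.trans ?_
  rw [← Finset.compl_singleton]
  refine lintegral_congr fun y => congrArg f ?_
  have h0 : Function.updateFinset x {0}ᶜ y 0 = x 0 := by simp [Function.updateFinset]
  exact h0 ▸ Fin.cons_self_tail _

section GraphWeight

variable {V W E : Type*} [AddGroup E]

noncomputable def edgeWeight (g : E → ℝ≥0∞) (hg : ∀ z, g (-z) = g z) (x : V → E) :
    Sym2 V → ℝ≥0∞ :=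
  Sym2.lift ⟨fun i j => g (x i - x j), fun i j => by dsimp only; rw [← neg_sub, hg]⟩

noncomputable def graphWeight (T : SimpleGraph V) [Fintype T.edgeSet] (g : E → ℝ≥0∞)
    (hg : ∀ z, g (-z) = g z) (x : V → E) : ℝ≥0∞ :=
  ∏ e ∈ T.edgeFinset, edgeWeight g hg x e

variable {g : E → ℝ≥0∞} {hg : ∀ z, g (-z) = g z}

@[simp] theorem edgeWeight_mk (x : V → E) (i j : V) :
    edgeWeight g hg x s(i, j) = g (x i - x j) :=
  rfl

theorem edgeWeight_map (x : V → E) (f : W → V) (e : Sym2 W) :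
    edgeWeight g hg x (e.map f) = edgeWeight g hg (x ∘ f) e := by
  induction e using Sym2.ind with
  | _ i j => rfl

theorem measurable_graphWeight [MeasurableSpace E] [MeasurableSub₂ E] (hgm : Measurable g)
    (T : SimpleGraph V) [Fintype T.edgeSet] :
    Measurable (graphWeight T g hg) := by
  refine Finset.measurable_prod _ fun e _ => ?_
  induction e using Sym2.ind with
  | _ i j => exact hgm.comp ((measurable_pi_apply i).sub (measurable_pi_apply j))

theorem prod_filter_lt_adj_eq_graphWeight [Fintype V] [LinearOrder V] (T : SimpleGraph V)
    [DecidableRel T.Adj] (x : V → E) :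
    ∏ p ∈ univ.filter (fun p : V × V => p.1 < p.2 ∧ T.Adj p.1 p.2), g (x p.1 - x p.2)
      = graphWeight T g hg x := by
  refine prod_nbij (fun p => s(p.1, p.2)) ?_ ?_ ?_ fun _ _ => rfl
  · rintro ⟨a, b⟩ hp
    simp_all
  · rintro ⟨a, b⟩ hp ⟨c, d⟩ hq h
    simp only [coe_filter, mem_univ, true_and, Set.mem_ofPred_eq, Sym2.eq_iff] at hp hq h
    grind
  · intro e he
    induction e using Sym2.ind with
    | _ a b =>
      simp only [SimpleGraph.coe_edgeFinset, SimpleGraph.mem_edgeSet] at he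
      rcases he.ne.lt_or_gt with hab | hba
      · exact ⟨(a, b), by simp [hab, he], rfl⟩
      · exact ⟨(b, a), by simp [hba, he.symm], Sym2.eq_swap⟩

variable [Fintype V] [DecidableEq V] {T : SimpleGraph V} [DecidableRel T.Adj]

theorem graphWeight_eq_mul_of_leaf {ℓ m : V} (hm : ∀ w, T.Adj ℓ w ↔ w = m) (x : V → E) :
    graphWeight T g hg x = g (x ℓ - x m) * graphWeight (T.induce {ℓ}ᶜ) g hg (fun v => x v) := by
  have hmem : s(ℓ, m) ∈ T.edgeFinset := T.mem_edgeFinset.2 ((hm m).2 rfl)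
  rw [graphWeight, ← mul_prod_erase _ _ hmem, SimpleGraph.edgeFinset_erase_eq_inter_sym2 hm,
    ← SimpleGraph.map_edgeFinset_induce, prod_map]
  simp only [edgeWeight_mk, Function.Embedding.sym2Map_apply, Function.Embedding.coe_subtype,
    edgeWeight_map]
  rfl

variable [MeasurableSpace E] [MeasurableAdd E] [MeasurableSub₂ E] (μ : Measure E)
  [μ.IsAddRightInvariant]

theorem lintegral_graphWeight_update_leaf (hgm : Measurable g) {ℓ m : V}
    (hm : ∀ w, T.Adj ℓ w ↔ w = m) (x : V → E) :
    ∫⁻ z, graphWeight T g hg (Function.update x ℓ z) ∂μ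
      = (∫⁻ z, g z ∂μ) * graphWeight (T.induce {ℓ}ᶜ) g hg (fun v => x v) := by
  have hmℓ : m ≠ ℓ := ((hm m).2 rfl).ne.symm
  have hrest (z : E) :
      (fun v : ({ℓ}ᶜ : Set V) => Function.update x ℓ z v) = fun v : ({ℓ}ᶜ : Set V) => x v :=
    funext fun v => Function.update_of_ne v.2 z x
  simp_rw [graphWeight_eq_mul_of_leaf hm, hrest, Function.update_self, Function.update_of_ne hmℓ]
  rw [lintegral_mul_const _
    (show Measurable fun z => g (z - x m) from hgm.comp (measurable_sub_const _)),
    lintegral_sub_right_eq_self]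

variable [SigmaFinite μ]

theorem lmarginal_graphWeight_of_isTree (hgm : Measurable g) (hT : T.IsTree) (r : V)
    (x : V → E) :
    (∫⋯∫⁻_(univ.erase r), graphWeight T g hg ∂fun _ => μ) x
      = (∫⁻ z, g z ∂μ) ^ (Fintype.card V - 1) := by
  induction hn : Fintype.card V generalizing V with
  | zero => exact absurd hn (Fintype.card_pos_iff.2 ⟨r⟩).ne'
  | succ n ih =>
    rcases Nat.eq_zero_or_pos n with rfl | hn0
    · have hedges : T.edgeFinset = ∅ := card_eq_zero.1 (by have := hT.card_edgeFinset; omega)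
      have hroot : univ.erase r = ∅ := by
        rw [← card_eq_zero, card_erase_of_mem (mem_univ r), card_univ, hn]
      simp [hroot, graphWeight, hedges]
    · have : Nontrivial V := Fintype.one_lt_card_iff_nontrivial.1 (by omega)
      obtain ⟨ℓ, hℓr, hℓ⟩ := hT.exists_ne_degree_eq_one r
      obtain ⟨m, hm⟩ : ∃ m, ∀ w, T.Adj ℓ w ↔ w = m := by
        obtain ⟨m, hm, huniq⟩ := SimpleGraph.degree_eq_one_iff_existsUnique_adj.1 hℓ
        exact ⟨m, fun w => ⟨huniq w, fun h => h ▸ hm⟩⟩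
      have hcard : Fintype.card ({ℓ}ᶜ : Set V) = n := by
        rw [Fintype.card_compl_set, hn]; simp
      rw [lmarginal_erase' _ (measurable_graphWeight hgm T) (mem_erase.2 ⟨hℓr, mem_univ ℓ⟩)]
      simp_rw [lintegral_graphWeight_update_leaf μ hgm hm]
      have hW : Measurable fun y : V → E => graphWeight (T.induce {ℓ}ᶜ) g hg fun v => y v :=
        (measurable_graphWeight hgm _).comp (measurable_pi_lambda _ fun v => measurable_pi_apply _)
      let r' : ({ℓ}ᶜ : Set V) := ⟨r, Set.mem_compl_singleton_iff.2 hℓr.symm⟩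
      have himage : (univ.erase r).erase ℓ = (univ.erase r').image Subtype.val := by
        ext v; by_cases hv : v = ℓ <;> simp [hv, r']
      have hsub := lmarginal_image (μ := fun _ : V => μ) Subtype.val_injective
        (univ.erase r') (measurable_graphWeight (hg := hg) hgm (T.induce {ℓ}ᶜ)) x
      simp only [Function.comp_def] at hsub
      rw [lmarginal_const_mul _ _ hW, himage]
      dsimp only
      rw [hsub, ih (hT.induce_compl_singleton_of_degree_eq_one hℓ) _ _ hcard, ← pow_succ']
      congr 1
      omega

end GraphWeight

theorem statement15_general (d k : ℕ)
    (T : SimpleGraph (Fin (k + 1))) [DecidableRel T.Adj] (hT : T.IsTree)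
    (h : (Fin d → ℝ) → ℝ) (hmeas : Measurable h) (hnonneg : ∀ x, 0 ≤ h x)
    (heven : ∀ x, h (-x) = h x)
    (x₀ : Fin d → ℝ) :
    (∫ y : Fin k → Fin d → ℝ,
        ∏ p ∈ Finset.univ.filter
            (fun p : Fin (k + 1) × Fin (k + 1) => p.1 < p.2 ∧ T.Adj p.1 p.2),
          h ((Fin.cons x₀ y : Fin (k + 1) → Fin d → ℝ) p.1
              - (Fin.cons x₀ y : Fin (k + 1) → Fin d → ℝ) p.2))
      = (∫ x : Fin d → ℝ, h x) ^ k := by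
  set g : (Fin d → ℝ) → ℝ≥0∞ := fun z => ENNReal.ofReal (h z)
  have hg : ∀ z, g (-z) = g z := fun z => by simp only [g, heven]
  have hgm : Measurable g := hmeas.ennreal_ofReal
  rw [integral_eq_lintegral_of_nonneg_ae (ae_of_all _ hnonneg) hmeas.aestronglyMeasurable,
    integral_eq_lintegral_of_nonneg_ae (ae_of_all _ fun y => prod_nonneg fun p _ => hnonneg _)
      (Measurable.aestronglyMeasurable ?_), ← ENNReal.toReal_pow]
  · congr 1
    have hroot := lintegral_cons_eq_lmarginal (fun _ => volume)
      (measurable_graphWeight (hg := hg) hgm T)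
      (Fin.cons x₀ 0 : Fin (k + 1) → Fin d → ℝ)
    rw [Fin.cons_zero] at hroot
    calc _ = ∫⁻ y : Fin k → Fin d → ℝ, graphWeight T g hg (Fin.cons x₀ y) := by
          refine lintegral_congr fun y => ?_
          rw [ENNReal.ofReal_prod_of_nonneg fun p _ => hnonneg _]
          exact prod_filter_lt_adj_eq_graphWeight (hg := hg) T (Fin.cons x₀ y)
      _ = _ := by
        rw [volume_pi, hroot, lmarginal_graphWeight_of_isTree volume hgm hT, Fintype.card_fin,
          Nat.add_sub_cancel]
  · have hcons := measurable_fin_cons (X := fun _ => Fin d → ℝ) (n := k) x₀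
    exact Finset.measurable_prod _ fun p _ => hmeas.comp (hcons.eval.sub hcons.eval)

/-- Let `T` be a tree on vertex set `{0, 1, …, k}` and let `h : ℝ^d → [0,∞)` be an even
measurable integrable function. Then for every fixed `x₀ ∈ ℝ^d`,
`∫_{(ℝ^d)^k} ∏_{{i,j} ∈ E(T)} h(x_i − x_j) dx_1 ⋯ dx_k = (∫_{ℝ^d} h)^k`,
where the product runs over the edges of `T` (each edge taken with orientation `i < j`,
which is immaterial since `h` is even), and `x : Fin (k+1) → ℝ^d` is given by `x 0 = x₀`
and `x i = y i` for the integration variables `y`. -/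
theorem statement15 (d k : ℕ) (hd : 1 ≤ d) (hk : 1 ≤ k)
    (T : SimpleGraph (Fin (k + 1))) [DecidableRel T.Adj] (hT : T.IsTree)
    (h : (Fin d → ℝ) → ℝ) (hmeas : Measurable h) (hnonneg : ∀ x, 0 ≤ h x)
    (heven : ∀ x, h (-x) = h x) (hint : Integrable h)
    (x₀ : Fin d → ℝ) :
    (∫ y : Fin k → Fin d → ℝ,
        ∏ p ∈ Finset.univ.filter
            (fun p : Fin (k + 1) × Fin (k + 1) => p.1 < p.2 ∧ T.Adj p.1 p.2),
          h ((Fin.cons x₀ y : Fin (k + 1) → Fin d → ℝ) p.1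
              - (Fin.cons x₀ y : Fin (k + 1) → Fin d → ℝ) p.2))
      = (∫ x : Fin d → ℝ, h x) ^ k :=
  statement15_general d k T hT h hmeas hnonneg heven x₀
end
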